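/- arXiv:1611.03302 — 10 statements merged into one kernel-verified Lean document; each statement's English description precedes it below -/
import Mathlib

section
/- The number of subgroups of the group Z_m × Z_n equals the sum over all divisors i of m and j of n of gcd(i, j). -/
/-!
A subgroup `H` of `M × N` is determined by its projection `A` to `M`, its intersection `B` with
`N`, and the homomorphism `A → N ⧸ B` sending `x` to the class of any `y` with `(x, y) ∈ H`;
conversely every such triple arises (a form of Goursat's lemma). In a finite cyclic group the
subgroups correspond to the divisors of the order through their cardinality, and there are
`gcd a c` homomorphisms from a cyclic group of order `a` to one of order `c`. Summing over the
triples gives `∑_{i ∣ m} ∑_{j ∣ n} gcd i (n / j)`, and `j ↦ n / j` permutes the divisors of `n`.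
-/

namespace AddSubgroup

section Goursat

variable {M N : Type*} [AddGroup M] [AddCommGroup N]

def ofQuotientHom (A : AddSubgroup M) (B : AddSubgroup N) (φ : A →+ N ⧸ B) :
    AddSubgroup (M × N) where
  carrier := {p | ∃ h : p.1 ∈ A, (p.2 : N ⧸ B) = φ ⟨p.1, h⟩}
  zero_mem' := ⟨A.zero_mem, (map_zero φ).symm⟩
  add_mem' := by
    rintro ⟨x₁, y₁⟩ ⟨x₂, y₂⟩ ⟨h₁, e₁⟩ ⟨h₂, e₂⟩
    refine ⟨A.add_mem h₁ h₂, ?_⟩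
    change ((y₁ + y₂ : N) : N ⧸ B) = φ (⟨x₁, h₁⟩ + ⟨x₂, h₂⟩)
    rw [map_add, ← e₁, ← e₂, QuotientAddGroup.mk_add]
  neg_mem' := by
    rintro ⟨x, y⟩ ⟨h, e⟩
    refine ⟨A.neg_mem h, ?_⟩
    change ((-y : N) : N ⧸ B) = φ (-⟨x, h⟩)
    rw [map_neg, ← e, QuotientAddGroup.mk_neg]

theorem mem_ofQuotientHom {A : AddSubgroup M} {B : AddSubgroup N} {φ : A →+ N ⧸ B}
    {p : M × N} : p ∈ ofQuotientHom A B φ ↔ ∃ h : p.1 ∈ A, (p.2 : N ⧸ B) = φ ⟨p.1, h⟩ :=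
  Iff.rfl

theorem map_fst_ofQuotientHom (A : AddSubgroup M) (B : AddSubgroup N) (φ : A →+ N ⧸ B) :
    (ofQuotientHom A B φ).map (AddMonoidHom.fst M N) = A := by
  ext x
  refine ⟨?_, fun hx => ?_⟩
  · rintro ⟨p, ⟨h, -⟩, rfl⟩
    exact h
  · obtain ⟨y, hy⟩ := QuotientAddGroup.mk_surjective (φ ⟨x, hx⟩)
    exact ⟨(x, y), ⟨hx, hy⟩, rfl⟩

theorem comap_inr_ofQuotientHom (A : AddSubgroup M) (B : AddSubgroup N) (φ : A →+ N ⧸ B) :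
    (ofQuotientHom A B φ).comap (AddMonoidHom.inr M N) = B := by
  ext y
  have hφ : φ ⟨0, A.zero_mem⟩ = 0 := map_zero φ
  simp only [mem_comap, AddMonoidHom.inr_apply, mem_ofQuotientHom]
  refine ⟨fun ⟨_, e⟩ => (QuotientAddGroup.eq_zero_iff y).mp (e.trans hφ), fun hy => ?_⟩
  exact ⟨A.zero_mem, ((QuotientAddGroup.eq_zero_iff y).mpr hy).trans hφ.symm⟩

theorem exists_prod_mem_of_mem_map_fst {H : AddSubgroup (M × N)} {x : M}
    (hx : x ∈ H.map (AddMonoidHom.fst M N)) : ∃ y, (x, y) ∈ H := by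
  obtain ⟨⟨x, y⟩, h, rfl⟩ := mem_map.mp hx
  exact ⟨y, h⟩

theorem mk_eq_mk_of_prod_mem {H : AddSubgroup (M × N)} {x : M} {y₁ y₂ : N}
    (h₁ : (x, y₁) ∈ H) (h₂ : (x, y₂) ∈ H) :
    (y₁ : N ⧸ H.comap (AddMonoidHom.inr M N)) = y₂ := by
  rw [QuotientAddGroup.eq]
  simpa using H.add_mem (H.neg_mem h₁) h₂

noncomputable def toQuotientHom (H : AddSubgroup (M × N)) :
    H.map (AddMonoidHom.fst M N) →+ N ⧸ H.comap (AddMonoidHom.inr M N) where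
  toFun x := (exists_prod_mem_of_mem_map_fst x.2).choose
  map_zero' :=
    (mk_eq_mk_of_prod_mem (exists_prod_mem_of_mem_map_fst (zero_mem _)).choose_spec
      H.zero_mem).trans (QuotientAddGroup.mk_zero _)
  map_add' x₁ x₂ :=
    (mk_eq_mk_of_prod_mem (exists_prod_mem_of_mem_map_fst (x₁ + x₂).2).choose_spec
      (H.add_mem (exists_prod_mem_of_mem_map_fst x₁.2).choose_spec
        (exists_prod_mem_of_mem_map_fst x₂.2).choose_spec)).trans
      (QuotientAddGroup.mk_add _ _ _)

theorem toQuotientHom_apply {H : AddSubgroup (M × N)} {x : M} {y : N} (hxy : (x, y) ∈ H)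
    (hx : x ∈ H.map (AddMonoidHom.fst M N)) : H.toQuotientHom ⟨x, hx⟩ = y :=
  mk_eq_mk_of_prod_mem (exists_prod_mem_of_mem_map_fst hx).choose_spec hxy

theorem ofQuotientHom_toQuotientHom (H : AddSubgroup (M × N)) :
    ofQuotientHom _ _ H.toQuotientHom = H := by
  ext ⟨x, y⟩
  rw [mem_ofQuotientHom]
  refine ⟨fun ⟨hx, e⟩ => ?_, fun hxy => ?_⟩
  · obtain ⟨y₀, hy₀⟩ := exists_prod_mem_of_mem_map_fst hx
    rw [toQuotientHom_apply hy₀ hx, eq_comm, QuotientAddGroup.eq] at e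
    simpa using H.add_mem hy₀ e
  · have hx : x ∈ H.map (AddMonoidHom.fst M N) := mem_map.mpr ⟨(x, y), hxy, rfl⟩
    exact ⟨hx, (toQuotientHom_apply hxy hx).symm⟩

theorem ofQuotientHom_injective :
    Function.Injective
      (fun t : Σ (A : AddSubgroup M) (B : AddSubgroup N), A →+ N ⧸ B =>
        ofQuotientHom t.1 t.2.1 t.2.2) := by
  rintro ⟨A, B, φ⟩ ⟨A', B', φ'⟩ (h : ofQuotientHom A B φ = ofQuotientHom A' B' φ')
  obtain rfl : A = A' := by
    rw [← map_fst_ofQuotientHom A B φ, ← map_fst_ofQuotientHom A' B' φ', h]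
  obtain rfl : B = B' := by
    rw [← comap_inr_ofQuotientHom A B φ, ← comap_inr_ofQuotientHom A B' φ', h]
  obtain rfl : φ = φ' := by
    ext x
    obtain ⟨y, hy⟩ := QuotientAddGroup.mk_surjective (φ x)
    have hxy : ((x : M), y) ∈ ofQuotientHom A B φ' := h ▸ ⟨x.2, hy⟩
    obtain ⟨_, e⟩ := hxy
    exact hy ▸ e
  rfl

noncomputable def sigmaQuotientHomEquiv :
    (Σ (A : AddSubgroup M) (B : AddSubgroup N), A →+ N ⧸ B) ≃ AddSubgroup (M × N) :=
  Equiv.ofBijective _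
    ⟨ofQuotientHom_injective, fun H => ⟨⟨_, _, H.toQuotientHom⟩, ofQuotientHom_toQuotientHom H⟩⟩

end Goursat

end AddSubgroup

namespace IsAddCyclic

theorem card_addMonoidHom (A C : Type*) [AddGroup A] [AddCommGroup C] [IsAddCyclic A]
    [IsAddCyclic C] [Finite C] :
    Nat.card (A →+ C) = (Nat.card A).gcd (Nat.card C) := by
  set a := Nat.card A
  -- `A ≃+ ZMod a`, and homomorphisms out of `ZMod a` are the elements of `C` killed by `a`
  -- (also for infinite `A`, where `a = 0` and `ZMod 0 = ℤ`).
  have hker : ∀ f : ℤ →+ C, f a = 0 ↔ (zmultiplesHom C).symm f ∈ (nsmulAddMonoidHom a).ker := by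
    intro f
    rw [AddMonoidHom.mem_ker, nsmulAddMonoidHom_apply, zmultiplesHom_symm_apply, ← map_nsmul,
      nsmul_one]
  let e : (A →+ C) ≃ (nsmulAddMonoidHom a : C →+ C).ker :=
    (zmodAddCyclicAddEquiv ‹_›).symm.addMonoidHomCongrLeftEquiv |>.trans
      ((ZMod.lift a).symm.trans (Equiv.subtypeEquiv (zmultiplesHom C).symm hker))
  rw [Nat.card_congr e, card_nsmulAddMonoidHom_ker, Nat.gcd_comm]

variable {G : Type*} [AddCommGroup G] [IsAddCyclic G] [Finite G]

theorem eq_ker_nsmul_card (H : AddSubgroup G) :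
    H = (nsmulAddMonoidHom (Nat.card H) : G →+ G).ker := by
  refine AddSubgroup.eq_of_le_of_card_ge (fun x hx => ?_) ?_
  · rw [AddMonoidHom.mem_ker, nsmulAddMonoidHom_apply]
    exact congrArg Subtype.val (card_nsmul_eq_zero' (x := (⟨x, hx⟩ : H)))
  · rw [card_nsmulAddMonoidHom_ker, Nat.gcd_eq_right H.card_addSubgroup_dvd_card]

theorem sum_addSubgroup_card [Fintype (AddSubgroup G)] {β : Type*} [AddCommMonoid β]
    (f : ℕ → β) : ∑ H : AddSubgroup G, f (Nat.card H) = ∑ d ∈ (Nat.card G).divisors, f d := by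
  refine Finset.sum_nbij' (fun H => Nat.card H) (fun d => (nsmulAddMonoidHom d : G →+ G).ker)
    (fun H _ => ?_) (fun _ _ => Finset.mem_univ _) (fun H _ => (eq_ker_nsmul_card H).symm)
    (fun d hd => ?_) (fun _ _ => rfl)
  · exact Nat.mem_divisors.mpr ⟨H.card_addSubgroup_dvd_card, Nat.card_pos.ne'⟩
  · rw [card_nsmulAddMonoidHom_ker, Nat.gcd_eq_right (Nat.dvd_of_mem_divisors hd)]

theorem card_addSubgroup_prod (M N : Type*) [AddCommGroup M] [AddCommGroup N] [IsAddCyclic M]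
    [IsAddCyclic N] [Finite M] [Finite N] :
    Nat.card (AddSubgroup (M × N)) =
      ∑ i ∈ (Nat.card M).divisors, ∑ j ∈ (Nat.card N).divisors, i.gcd j := by
  have := Fintype.ofFinite (AddSubgroup M)
  have := Fintype.ofFinite (AddSubgroup N)
  have (A : AddSubgroup M) (B : AddSubgroup N) : Finite (A →+ N ⧸ B) := DFunLike.finite _
  have hcard (A : AddSubgroup M) (B : AddSubgroup N) :
      Nat.card (A →+ N ⧸ B) = (Nat.card A).gcd (Nat.card N / Nat.card B) := by
    have := isAddCyclic_of_surjective _ (QuotientAddGroup.mk'_surjective B)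
    rw [card_addMonoidHom, ← AddSubgroup.index_eq_card, ← B.card_mul_index,
      Nat.mul_div_cancel_left _ Nat.card_pos]
  calc Nat.card (AddSubgroup (M × N))
      = ∑ A : AddSubgroup M, ∑ B : AddSubgroup N, Nat.card (A →+ N ⧸ B) := by
        simp only [← Nat.card_congr AddSubgroup.sigmaQuotientHomEquiv, Nat.card_sigma]
    _ = ∑ A : AddSubgroup M, ∑ j ∈ (Nat.card N).divisors, (Nat.card A).gcd (Nat.card N / j) := by
        simp only [hcard]
        exact Finset.sum_congr rfl fun A _ =>
          sum_addSubgroup_card fun d => (Nat.card A).gcd (Nat.card N / d)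
    _ = ∑ A : AddSubgroup M, ∑ j ∈ (Nat.card N).divisors, (Nat.card A).gcd j := by
        simp only [Nat.sum_div_divisors]
    _ = ∑ i ∈ (Nat.card M).divisors, ∑ j ∈ (Nat.card N).divisors, i.gcd j :=
        sum_addSubgroup_card fun i => ∑ j ∈ (Nat.card N).divisors, i.gcd j

end IsAddCyclic

/-- The number of subgroups of `Z_m × Z_n` equals `∑_{i ∣ m} ∑_{j ∣ n} gcd(i,j)`. -/
theorem number_of_subgroups_rank_two (m n : ℕ) (hm : 0 < m) (hn : 0 < n) :
    Nat.card (AddSubgroup (ZMod m × ZMod n)) =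
      ∑ i ∈ m.divisors, ∑ j ∈ n.divisors, Nat.gcd i j := by
  have : NeZero m := ⟨hm.ne'⟩
  have : NeZero n := ⟨hn.ne'⟩
  simpa only [Nat.card_zmod] using IsAddCyclic.card_addSubgroup_prod (ZMod m) (ZMod n)
end

section
/- For k dividing m·n, the number of subgroups of order k of Z_m × Z_n equals the sum of φ(ij/k) over all pairs (i, j) with i ∣ gcd(m,k), j ∣ gcd(n,k), and k ∣ ij. -/
/-!
The projections of a subgroup `H ≤ ℤ_m × ℤ_n` of order `k` have orders `i ∣ gcd(m, k)` and
`j ∣ gcd(n, k)`, with `k ∣ ij`. A cyclic group has exactly one subgroup of each order, so `H` lies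
in the copy of `ℤ_i × ℤ_j` inside `ℤ_m × ℤ_n` and projects onto both of its factors. Put
`d = ij / k`. The intersection of such a subdirect `H` with `0 × ℤ_j` has order `j / d`, so it is
the kernel of reduction mod `d`; choosing `(1, t₀) ∈ H` then shows that `H` is the set of `(s, t)`
with `t ≡ u s (mod d)` for `u = t₀ mod d`, and surjectivity of the second projection makes `u` a
unit. Distinct units give distinct subgroups, so each admissible pair `(i, j)` contributes
`φ(ij / k)` subgroups.
-/

open Function AddSubgroup

theorem Finite.card_subtype_eq_sum_card_fiberwise {α β : Type*} [Finite α] [DecidableEq β]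
    {p : α → Prop} {f : α → β} {t : Finset β} (hf : ∀ a, p a → f a ∈ t) :
    Nat.card {a // p a} = ∑ b ∈ t, Nat.card {a // f a = b ∧ p a} := by
  have := Fintype.ofFinite α
  classical
  simp only [Nat.card_eq_fintype_card, Fintype.card_subtype]
  rw [Finset.card_eq_sum_card_fiberwise fun a ha => hf a (Finset.mem_filter.1 ha).2]
  simp only [Finset.filter_filter, and_comm]

theorem Nat.dvd_of_mul_eq_mul_of_dvd {i j k d : ℕ} (hj : j ≠ 0) (hjk : j ∣ k)
    (h : k * d = i * j) : d ∣ i := by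
  obtain ⟨c, rfl⟩ := hjk
  exact ⟨c, Nat.eq_of_mul_eq_mul_left (Nat.pos_of_ne_zero hj) (by rw [mul_comm j i, ← h]; ring)⟩

theorem AddMonoidHom.card_ker_mul_card_of_surjective {G G' : Type*} [AddGroup G] [AddGroup G']
    {f : G →+ G'} (hf : Surjective f) : Nat.card f.ker * Nat.card G' = Nat.card G := by
  rw [← card_top (G := G'), ← f.range_eq_top_of_surjective hf, ← index_ker, card_mul_index]

theorem IsAddCyclic.addSubgroup_eq_of_card_eq {G : Type*} [AddCommGroup G] [IsAddCyclic G]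
    [Finite G] {S T : AddSubgroup G} (h : Nat.card S = Nat.card T) : S = T := by
  have eq_ker : ∀ U : AddSubgroup G, U = (nsmulAddMonoidHom (Nat.card U) : G →+ G).ker :=
    fun U => eq_of_le_of_card_ge
      (fun x hx => congrArg Subtype.val (card_nsmul_eq_zero' (x := (⟨x, hx⟩ : U))))
      (by rw [IsAddCyclic.card_nsmulAddMonoidHom_ker, Nat.gcd_eq_right U.card_addSubgroup_dvd_card])
  rw [eq_ker S, eq_ker T, h]

namespace AddSubgroup

variable {G₁ G₂ G₁' G₂' : Type*} [AddGroup G₁] [AddGroup G₂] [AddGroup G₁'] [AddGroup G₂']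

def IsSubdirect (H : AddSubgroup (G₁ × G₂)) : Prop :=
  H.map (AddMonoidHom.fst G₁ G₂) = ⊤ ∧ H.map (AddMonoidHom.snd G₁ G₂) = ⊤

theorem card_dvd_card_map_fst_mul_card_map_snd (H : AddSubgroup (G₁ × G₂)) :
    Nat.card H ∣
      Nat.card (H.map (AddMonoidHom.fst G₁ G₂)) * Nat.card (H.map (AddMonoidHom.snd G₁ G₂)) := by
  rw [← Nat.card_prod, ← Nat.card_congr (prodEquiv _ _).toEquiv]
  exact card_dvd_of_le (le_prod_iff.2 ⟨le_rfl, le_rfl⟩)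

theorem card_map_fst_mul_card_goursatSnd (H : AddSubgroup (G₁ × G₂)) :
    Nat.card (H.map (AddMonoidHom.fst G₁ G₂)) * Nat.card H.goursatSnd = Nat.card H := by
  set π := (AddMonoidHom.fst G₁ G₂).comp H.subtype
  set ι := ((AddMonoidHom.snd G₁ G₂).comp H.subtype).comp π.ker.subtype
  have hι : Injective ι := fun z z' hzz' =>
    Subtype.ext (Subtype.ext (Prod.ext (z.2.trans z'.2.symm) hzz'))
  have hrange : H.goursatSnd = ι.range := by
    rw [AddMonoidHom.range_comp, range_subtype]; rfl
  have hπ : π.range = H.map (AddMonoidHom.fst G₁ G₂) := by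
    rw [AddMonoidHom.range_comp, range_subtype]
  rw [hrange, AddMonoidHom.range_eq_map, card_map_of_injective hι, card_top, ← hπ, ← index_ker,
    mul_comm, card_mul_index]

theorem card_map_mem_divisors_gcd [Finite G₂] (f : G₁ →+ G₂) (H : AddSubgroup G₁) :
    Nat.card (H.map f) ∈ ((Nat.card G₂).gcd (Nat.card H)).divisors :=
  Nat.mem_divisors.2 ⟨Nat.dvd_gcd (card_addSubgroup_dvd_card _) (card_map_dvd _ _),
    (Nat.gcd_pos_of_pos_left _ Nat.card_pos).ne'⟩

theorem map_fst_map_prodMap (f : G₁ →+ G₁') (g : G₂ →+ G₂') (H : AddSubgroup (G₁ × G₂)) :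
    (H.map (f.prodMap g)).map (AddMonoidHom.fst G₁' G₂') =
      (H.map (AddMonoidHom.fst G₁ G₂)).map f := by
  rw [map_map, map_map]; rfl

theorem map_snd_map_prodMap (f : G₁ →+ G₁') (g : G₂ →+ G₂') (H : AddSubgroup (G₁ × G₂)) :
    (H.map (f.prodMap g)).map (AddMonoidHom.snd G₁' G₂') =
      (H.map (AddMonoidHom.snd G₁ G₂)).map g := by
  rw [map_map, map_map]; rfl

theorem card_subdirect_eq_card_map_eq_range {f : G₁ →+ G₁'} {g : G₂ →+ G₂'} (hf : Injective f)
    (hg : Injective g) (k : ℕ) :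
    Nat.card {H : AddSubgroup (G₁ × G₂) // H.IsSubdirect ∧ Nat.card H = k} =
      Nat.card {H : AddSubgroup (G₁' × G₂') // H.map (AddMonoidHom.fst G₁' G₂') = f.range ∧
        H.map (AddMonoidHom.snd G₁' G₂') = g.range ∧ Nat.card H = k} := by
  have hfg : Injective (f.prodMap g) := hf.prodMap hg
  have map_fst_eq_range (H : AddSubgroup (G₁ × G₂)) :
      (H.map (f.prodMap g)).map (AddMonoidHom.fst G₁' G₂') = f.range ↔
        H.map (AddMonoidHom.fst G₁ G₂) = ⊤ := by
    rw [map_fst_map_prodMap, AddMonoidHom.range_eq_map, (map_injective hf).eq_iff]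
  have map_snd_eq_range (H : AddSubgroup (G₁ × G₂)) :
      (H.map (f.prodMap g)).map (AddMonoidHom.snd G₁' G₂') = g.range ↔
        H.map (AddMonoidHom.snd G₁ G₂) = ⊤ := by
    rw [map_snd_map_prodMap, AddMonoidHom.range_eq_map, (map_injective hg).eq_iff]
  refine Nat.card_congr (Equiv.ofBijective (fun H => ⟨H.1.map (f.prodMap g), ?_⟩) ⟨?_, ?_⟩)
  · obtain ⟨H, ⟨h₁, h₂⟩, hk⟩ := H
    exact ⟨(map_fst_eq_range H).2 h₁, (map_snd_eq_range H).2 h₂,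
      (card_map_of_injective hfg).trans hk⟩
  · exact fun H H' h => Subtype.ext (map_injective hfg (congrArg Subtype.val h))
  · rintro ⟨H', h₁, h₂, hk⟩
    have hle : H' ≤ (f.prodMap g).range := by
      rw [AddMonoidHom.range_prodMap]; exact le_prod_iff.2 ⟨h₁.le, h₂.le⟩
    have hH' : (H'.comap (f.prodMap g)).map (f.prodMap g) = H' := by
      rw [map_comap_eq, inf_eq_right.2 hle]
    refine ⟨⟨H'.comap (f.prodMap g), ⟨?_, ?_⟩, ?_⟩, Subtype.ext hH'⟩
    · rw [← map_fst_eq_range, hH', h₁]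
    · rw [← map_snd_eq_range, hH', h₂]
    · rw [← card_map_of_injective hfg, hH', hk]

end AddSubgroup

namespace ZMod

variable {i j d : ℕ}

def slopeHom (hi : d ∣ i) (hj : d ∣ j) (u : ZMod d) : ZMod i × ZMod j →+ ZMod d :=
  (castHom hj (ZMod d)).toAddMonoidHom.comp (AddMonoidHom.snd _ _) -
    (AddMonoidHom.mulLeft u).comp ((castHom hi (ZMod d)).toAddMonoidHom.comp (AddMonoidHom.fst _ _))

section

variable (hi : d ∣ i) (hj : d ∣ j)

theorem mem_ker_slopeHom {u : ZMod d} {s : ZMod i} {t : ZMod j} :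
    (s, t) ∈ (slopeHom hi hj u).ker ↔ castHom hj (ZMod d) t = u * castHom hi (ZMod d) s :=
  sub_eq_zero

theorem card_ker_slopeHom (u : ZMod d) : Nat.card (slopeHom hi hj u).ker * d = i * j := by
  have hsurj : Surjective (slopeHom hi hj u) := fun z => by
    obtain ⟨t, ht⟩ := ZMod.ringHom_surjective (castHom hj (ZMod d)) z
    exact ⟨(0, t), by simp [slopeHom, ht]⟩
  simpa only [Nat.card_prod, Nat.card_zmod] using AddMonoidHom.card_ker_mul_card_of_surjective hsurj

theorem isSubdirect_ker_slopeHom (u : (ZMod d)ˣ) : (slopeHom hi hj u).ker.IsSubdirect := by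
  constructor <;> rw [eq_top_iff]
  · intro s _
    obtain ⟨t, ht⟩ := ZMod.ringHom_surjective (castHom hj (ZMod d)) (u * castHom hi (ZMod d) s)
    exact ⟨(s, t), (mem_ker_slopeHom hi hj).2 ht, rfl⟩
  · intro t _
    obtain ⟨s, hs⟩ := ZMod.ringHom_surjective (castHom hi (ZMod d)) (↑u⁻¹ * castHom hj (ZMod d) t)
    exact ⟨(s, t), (mem_ker_slopeHom hi hj).2 (by rw [hs, Units.mul_inv_cancel_left]), rfl⟩

theorem ker_slopeHom_injective : Injective fun u : ZMod d => (slopeHom hi hj u).ker := by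
  intro u u' (h : (slopeHom hi hj u).ker = (slopeHom hi hj u').ker)
  obtain ⟨t, ht⟩ := ZMod.ringHom_surjective (castHom hj (ZMod d)) u
  have hmem : ((1 : ZMod i), t) ∈ (slopeHom hi hj u).ker :=
    (mem_ker_slopeHom hi hj).2 (by rw [map_one, mul_one, ht])
  rwa [h, mem_ker_slopeHom, map_one, mul_one, ht] at hmem

theorem goursatSnd_eq_ker_castHom [NeZero i] [NeZero j] {H : AddSubgroup (ZMod i × ZMod j)}
    (hH : H.map (AddMonoidHom.fst _ _) = ⊤) (hcard : Nat.card H * d = i * j) :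
    H.goursatSnd = (castHom hj (ZMod d)).toAddMonoidHom.ker := by
  apply IsAddCyclic.addSubgroup_eq_of_card_eq
  have hK := card_map_fst_mul_card_goursatSnd H
  have hker := AddMonoidHom.card_ker_mul_card_of_surjective
    (f := (castHom hj (ZMod d)).toAddMonoidHom) (ZMod.ringHom_surjective _)
  rw [hH, card_top, Nat.card_zmod] at hK
  rw [Nat.card_zmod, Nat.card_zmod] at hker
  have hd : d ≠ 0 := by
    rintro rfl
    exact mul_ne_zero (NeZero.ne i) (NeZero.ne j) (by rw [← hcard, mul_zero])
  refine Nat.eq_of_mul_eq_mul_right (Nat.pos_of_ne_zero hd) ?_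
  refine Nat.eq_of_mul_eq_mul_left (Nat.pos_of_ne_zero (NeZero.ne i)) ?_
  rw [hker, ← mul_assoc, hK, hcard]

theorem le_ker_slopeHom [NeZero i] {H : AddSubgroup (ZMod i × ZMod j)} {t₀ : ZMod j}
    (h₀ : (1, t₀) ∈ H) (hK : H.goursatSnd ≤ (castHom hj (ZMod d)).toAddMonoidHom.ker) :
    H ≤ (slopeHom hi hj (castHom hj (ZMod d) t₀)).ker := by
  rintro ⟨s, t⟩ hst
  have hdiff : ((0 : ZMod i), t - s.val • t₀) ∈ H := by
    convert H.sub_mem hst (H.nsmul_mem h₀ s.val) using 1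
    simp
  have hker : castHom hj (ZMod d) (t - s.val • t₀) = 0 := hK (mem_goursatSnd.2 hdiff)
  rw [map_sub, map_nsmul, sub_eq_zero] at hker
  have hs : castHom hi (ZMod d) s = s.val := by rw [castHom_apply, cast_eq_val]
  rw [mem_ker_slopeHom, hker, nsmul_eq_mul, mul_comm, hs]

theorem exists_eq_ker_slopeHom [NeZero i] [NeZero j] {H : AddSubgroup (ZMod i × ZMod j)}
    (hH : H.IsSubdirect) (hcard : Nat.card H * d = i * j) :
    ∃ u : (ZMod d)ˣ, H = (slopeHom hi hj u).ker := by
  obtain ⟨⟨_, t₀⟩, h₀, rfl⟩ : (1 : ZMod i) ∈ H.map (AddMonoidHom.fst _ _) := hH.1 ▸ mem_top _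
  have hle := le_ker_slopeHom hi hj h₀ (goursatSnd_eq_ker_castHom hj hH.1 hcard).le
  have heq := eq_of_le_of_card_ge hle <| Nat.le_of_eq <|
    Nat.eq_of_mul_eq_mul_right (Nat.pos_of_ne_zero (ne_zero_of_dvd_ne_zero (NeZero.ne i) hi))
      ((card_ker_slopeHom hi hj _).trans hcard.symm)
  obtain ⟨⟨s₁, _⟩, h₁, rfl⟩ : (1 : ZMod j) ∈ H.map (AddMonoidHom.snd _ _) := hH.2 ▸ mem_top _
  have hu := (mem_ker_slopeHom hi hj).1 (hle h₁)
  rw [map_one] at hu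
  refine ⟨(IsUnit.of_mul_eq_one _ hu.symm).unit, ?_⟩
  rwa [IsUnit.unit_spec]

end

theorem card_subdirect_eq_totient [NeZero i] [NeZero j] (hi : d ∣ i) (hj : d ∣ j) :
    Nat.card {H : AddSubgroup (ZMod i × ZMod j) // H.IsSubdirect ∧ Nat.card H * d = i * j} =
      d.totient := by
  have : NeZero d := ⟨ne_zero_of_dvd_ne_zero (NeZero.ne i) hi⟩
  rw [← ZMod.card_units_eq_totient, ← Nat.card_eq_fintype_card]
  refine (Nat.card_congr (Equiv.ofBijective (fun u : (ZMod d)ˣ => ⟨(slopeHom hi hj u).ker,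
    isSubdirect_ker_slopeHom hi hj u, card_ker_slopeHom hi hj u⟩) ⟨?_, ?_⟩)).symm
  · exact fun u u' h => Units.ext (ker_slopeHom_injective hi hj (congrArg Subtype.val h))
  · rintro ⟨H, hH, hcard⟩
    obtain ⟨u, rfl⟩ := exists_eq_ker_slopeHom hi hj hH hcard
    exact ⟨u, rfl⟩

theorem card_subdirect_eq_totient_div [NeZero i] [NeZero j] {k : ℕ} (hik : i ∣ k) (hjk : j ∣ k)
    (hkij : k ∣ i * j) :
    Nat.card {H : AddSubgroup (ZMod i × ZMod j) // H.IsSubdirect ∧ Nat.card H = k} =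
      (i * j / k).totient := by
  have hkd : k * (i * j / k) = i * j := Nat.mul_div_cancel' hkij
  have hd : i * j / k ≠ 0 := fun h => mul_ne_zero (NeZero.ne i) (NeZero.ne j) (by
    rw [← hkd, h, mul_zero])
  rw [← card_subdirect_eq_totient (Nat.dvd_of_mul_eq_mul_of_dvd (NeZero.ne j) hjk hkd)
    (Nat.dvd_of_mul_eq_mul_of_dvd (NeZero.ne i) hik (by rw [hkd, mul_comm]))]
  refine Nat.card_congr (Equiv.subtypeEquivRight fun H => and_congr_right' ?_)
  exact ⟨fun h => h ▸ hkd,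
    fun h => Nat.eq_of_mul_eq_mul_right (Nat.pos_of_ne_zero hd) (h.trans hkd.symm)⟩

variable {m : ℕ}

def inclusionOfDvd (h : i ∣ m) : ZMod i →+ ZMod m :=
  ZMod.lift i ⟨zmultiplesHom (ZMod m) ((m / i : ℕ) : ZMod m), by
    simp only [zmultiplesHom_apply, natCast_zsmul, ← Nat.cast_smul_eq_nsmul (ZMod m), smul_eq_mul,
      ← Nat.cast_mul, Nat.mul_div_cancel' h, ZMod.natCast_self]⟩

variable [NeZero m]

theorem inclusionOfDvd_injective (h : i ∣ m) : Injective (inclusionOfDvd h) := by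
  have horder : addOrderOf ((m / i : ℕ) : ZMod m) = i := by
    rw [ZMod.addOrderOf_coe _ (NeZero.ne m), Nat.gcd_eq_right (Nat.div_dvd_of_dvd h),
      Nat.div_div_self h (NeZero.ne m)]
  rw [inclusionOfDvd, ZMod.lift_injective]
  intro s hs
  rwa [zmultiplesHom_apply, ← addOrderOf_dvd_iff_zsmul_eq_zero, horder,
    ← ZMod.intCast_zmod_eq_zero_iff_dvd] at hs

theorem eq_range_inclusionOfDvd_iff (h : i ∣ m) (S : AddSubgroup (ZMod m)) :
    S = (inclusionOfDvd h).range ↔ Nat.card S = i := by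
  have hcard : Nat.card (inclusionOfDvd h).range = i := by
    rw [AddMonoidHom.range_eq_map, card_map_of_injective (inclusionOfDvd_injective h), card_top,
      Nat.card_zmod]
  exact ⟨fun hS => hS ▸ hcard,
    fun hS => IsAddCyclic.addSubgroup_eq_of_card_eq (hS.trans hcard.symm)⟩

theorem card_card_map_fst_snd_eq_card_subdirect {n : ℕ} [NeZero n] (him : i ∣ m) (hjn : j ∣ n)
    (k : ℕ) :
    Nat.card {H : AddSubgroup (ZMod m × ZMod n) // Nat.card (H.map (AddMonoidHom.fst _ _)) = i ∧
      Nat.card (H.map (AddMonoidHom.snd _ _)) = j ∧ Nat.card H = k} =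
    Nat.card {H : AddSubgroup (ZMod i × ZMod j) // H.IsSubdirect ∧ Nat.card H = k} := by
  rw [AddSubgroup.card_subdirect_eq_card_map_eq_range (inclusionOfDvd_injective him)
    (inclusionOfDvd_injective hjn)]
  simp only [eq_range_inclusionOfDvd_iff]

end ZMod

theorem number_of_subgroups_order_k_rank_two_general (m n k : ℕ) (hm : 0 < m) (hn : 0 < n) :
    Nat.card {H : AddSubgroup (ZMod m × ZMod n) // Nat.card H = k} =
      ∑ i ∈ (Nat.gcd m k).divisors, ∑ j ∈ (Nat.gcd n k).divisors,
        if k ∣ i * j then Nat.totient (i * j / k) else 0 := by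
  classical
  have : NeZero m := ⟨hm.ne'⟩
  have : NeZero n := ⟨hn.ne'⟩
  have cards_mem (H : AddSubgroup (ZMod m × ZMod n)) (hH : Nat.card H = k) :
      (Nat.card (H.map (AddMonoidHom.fst _ _)), Nat.card (H.map (AddMonoidHom.snd _ _))) ∈
        ((m.gcd k).divisors ×ˢ (n.gcd k).divisors).filter fun p => k ∣ p.1 * p.2 := by
    subst hH
    refine Finset.mem_filter.2 ⟨Finset.mem_product.2 ⟨?_, ?_⟩,
      H.card_dvd_card_map_fst_mul_card_map_snd⟩
    · simpa only [Nat.card_zmod] using card_map_mem_divisors_gcd (AddMonoidHom.fst _ _) H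
    · simpa only [Nat.card_zmod] using card_map_mem_divisors_gcd (AddMonoidHom.snd _ _) H
  rw [Finite.card_subtype_eq_sum_card_fiberwise cards_mem, Finset.sum_filter, Finset.sum_product]
  refine Finset.sum_congr rfl fun i hi => Finset.sum_congr rfl fun j hj => ?_
  split_ifs with hkij
  · obtain ⟨him, hik⟩ := Nat.dvd_gcd_iff.1 (Nat.dvd_of_mem_divisors hi)
    obtain ⟨hjn, hjk⟩ := Nat.dvd_gcd_iff.1 (Nat.dvd_of_mem_divisors hj)
    have : NeZero i := ⟨(Nat.pos_of_mem_divisors hi).ne'⟩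
    have : NeZero j := ⟨(Nat.pos_of_mem_divisors hj).ne'⟩
    simp only [Prod.mk.injEq, and_assoc]
    rw [ZMod.card_card_map_fst_snd_eq_card_subdirect him hjn,
      ZMod.card_subdirect_eq_totient_div hik hjk hkij]
  · rfl

/-- The number of subgroups of order `k` of `Z_m × Z_n` equals
`∑ φ(ij/k)` over `i ∣ gcd(m,k)`, `j ∣ gcd(n,k)` with `k ∣ ij`. -/
theorem number_of_subgroups_order_k_rank_two (m n k : ℕ) (hm : 0 < m) (hn : 0 < n)
    (hk : k ∣ m * n) :
    Nat.card {H : AddSubgroup (ZMod m × ZMod n) // Nat.card H = k} =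
      ∑ i ∈ (Nat.gcd m k).divisors, ∑ j ∈ (Nat.gcd n k).divisors,
        if k ∣ i * j then Nat.totient (i * j / k) else 0 :=
  number_of_subgroups_order_k_rank_two_general m n k hm hn
end

section
/- For a prime p and integers 1 ≤ a ≤ b, the total number of subgroups of Z_{p^a} × Z_{p^b} equals ((b−a+1)p^{a+2} − (b−a−1)p^{a+1} − (a+b+3)p + (a+b+1)) / (p−1)^2. -/
open Finset AddSubgroup


section ProdEquiv
variable {M N : Type*} [AddCommGroup M] [AddCommGroup N]

lemma snd_eq_mod {H : AddSubgroup (M × N)} {z w : M × N} (hz : z ∈ H) (hw : w ∈ H)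
    (h1 : z.1 = w.1) : (z.2 : N ⧸ H.goursatSnd) = (w.2 : N ⧸ H.goursatSnd) := by
  rw [QuotientAddGroup.eq_iff_sub_mem, AddSubgroup.mem_goursatSnd]
  have h2 : ((0 : M), z.2 - w.2) ∈ H := by
    have h3 := sub_mem hz hw
    rwa [show z - w = ((z - w).1, z.2 - w.2) from rfl, show (z - w).1 = 0 by simp [h1]] at h3
  exact h2

lemma sigma_hom_ext {A A' : AddSubgroup M} {K K' : AddSubgroup N} (φ : A →+ N ⧸ K)
    (φ' : A' →+ N ⧸ K') (hA : A = A') (hK : K = K')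
    (hφ : ∀ (x : M) (hx : x ∈ A) (hx' : x ∈ A') (y : N),
      φ ⟨x, hx⟩ = (y : N ⧸ K) ↔ φ' ⟨x, hx'⟩ = (y : N ⧸ K')) :
    (⟨A, K, φ⟩ : Σ (A : AddSubgroup M) (K : AddSubgroup N), (A →+ N ⧸ K)) = ⟨A', K', φ'⟩ := by
  subst hA; subst hK
  have : φ = φ' := by
    ext a
    obtain ⟨x, hx⟩ := a
    obtain ⟨y, hy⟩ := QuotientAddGroup.mk_surjective (φ ⟨x, hx⟩)
    rw [← hy]
    exact ((hφ x hx hx y).mp hy.symm).symm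
  rw [this]

/-- The gluing homomorphism of a subgroup of a product. -/
noncomputable def projHom (H : AddSubgroup (M × N)) :
    H.map (AddMonoidHom.fst M N) →+ N ⧸ H.goursatSnd :=
  AddMonoidHom.mk' (fun x => ((AddSubgroup.mem_map.mp x.2).choose.2 : N ⧸ H.goursatSnd))
    (by
      rintro x y
      have hx := (AddSubgroup.mem_map.mp x.2).choose_spec
      have hy := (AddSubgroup.mem_map.mp y.2).choose_spec
      have hxy := (AddSubgroup.mem_map.mp (x + y).2).choose_spec
      have hx2 : (AddSubgroup.mem_map.mp x.2).choose.1 = (x : M) := hx.2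
      have hy2 : (AddSubgroup.mem_map.mp y.2).choose.1 = (y : M) := hy.2
      have hxy2 : (AddSubgroup.mem_map.mp (x + y).2).choose.1 = (x : M) + y := hxy.2
      have h1 : (AddSubgroup.mem_map.mp (x + y).2).choose.1 =
          ((AddSubgroup.mem_map.mp x.2).choose + (AddSubgroup.mem_map.mp y.2).choose).1 := by
        show _ = (AddSubgroup.mem_map.mp x.2).choose.1 + (AddSubgroup.mem_map.mp y.2).choose.1
        rw [hx2, hy2, hxy2]
      have h2 := snd_eq_mod hxy.1 (add_mem hx.1 hy.1) h1
      show ((AddSubgroup.mem_map.mp (x + y).2).choose.2 : N ⧸ H.goursatSnd) =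
        ((AddSubgroup.mem_map.mp x.2).choose.2 : N ⧸ H.goursatSnd)
          + ((AddSubgroup.mem_map.mp y.2).choose.2 : N ⧸ H.goursatSnd)
      rw [h2]
      rfl)

lemma projHom_eq (H : AddSubgroup (M × N)) {z : M × N} (hz : z ∈ H)
    (h : z.1 ∈ H.map (AddMonoidHom.fst M N)) :
    projHom H ⟨z.1, h⟩ = (z.2 : N ⧸ H.goursatSnd) := by
  have hs := (AddSubgroup.mem_map.mp h).choose_spec
  exact snd_eq_mod hs.1 hz hs.2

/-- The subgroup of the product built from a gluing datum. -/
def mkSub (A : AddSubgroup M) (K : AddSubgroup N) (φ : A →+ N ⧸ K) :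
    AddSubgroup (M × N) where
  carrier := {z | ∃ h : z.1 ∈ A, (z.2 : N ⧸ K) = φ ⟨z.1, h⟩}
  zero_mem' := ⟨zero_mem _, by show ((0 : N) : N ⧸ K) = φ 0; simp⟩
  add_mem' := by
    rintro a b ⟨ha, ha2⟩ ⟨hb, hb2⟩
    refine ⟨add_mem ha hb, ?_⟩
    show ((a.2 + b.2 : N) : N ⧸ K) = φ (⟨a.1, ha⟩ + ⟨b.1, hb⟩)
    rw [map_add, ← ha2, ← hb2, QuotientAddGroup.mk_add]
  neg_mem' := by
    rintro a ⟨ha, ha2⟩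
    refine ⟨neg_mem ha, ?_⟩
    show ((-a.2 : N) : N ⧸ K) = φ (-⟨a.1, ha⟩)
    rw [map_neg, ← ha2, QuotientAddGroup.mk_neg]

lemma mem_mkSub {A : AddSubgroup M} {K : AddSubgroup N} {φ : A →+ N ⧸ K} {z : M × N} :
    z ∈ mkSub A K φ ↔ ∃ h : z.1 ∈ A, (z.2 : N ⧸ K) = φ ⟨z.1, h⟩ := Iff.rfl

noncomputable def subProdEquiv :
    AddSubgroup (M × N) ≃
      Σ (A : AddSubgroup M) (K : AddSubgroup N), (A →+ N ⧸ K) where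
  toFun H := ⟨H.map (AddMonoidHom.fst M N), H.goursatSnd, projHom H⟩
  invFun T := mkSub T.1 T.2.1 T.2.2
  left_inv H := by
    ext z
    rw [mem_mkSub]
    constructor
    · rintro ⟨h, h2⟩
      obtain ⟨w, hw, hw1⟩ := AddSubgroup.mem_map.mp h
      have hw1' : w.1 = z.1 := hw1
      have h3 : projHom H ⟨z.1, h⟩ = (w.2 : N ⧸ H.goursatSnd) := by
        rw [show (⟨z.1, h⟩ : H.map (AddMonoidHom.fst M N)) = ⟨w.1, hw1' ▸ h⟩ from
          Subtype.ext hw1'.symm]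
        exact projHom_eq H hw _
      rw [h3, QuotientAddGroup.eq_iff_sub_mem, AddSubgroup.mem_goursatSnd] at h2
      have : z = w + (0, z.2 - w.2) := by ext <;> simp [hw1']
      rw [this]
      exact add_mem hw h2
    · intro hz
      exact ⟨⟨z, hz, rfl⟩, (projHom_eq H hz _).symm⟩
  right_inv := by
    rintro ⟨A, K, φ⟩
    have hA : (mkSub A K φ).map (AddMonoidHom.fst M N) = A := by
      ext x
      rw [AddSubgroup.mem_map]
      constructor
      · rintro ⟨z, hz, rfl⟩
        exact (mem_mkSub.mp hz).1
      · intro hx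
        obtain ⟨y, hy⟩ := QuotientAddGroup.mk_surjective (φ ⟨x, hx⟩)
        exact ⟨(x, y), mem_mkSub.mpr ⟨hx, hy⟩, rfl⟩
    have hK : (mkSub A K φ).goursatSnd = K := by
      ext h
      rw [AddSubgroup.mem_goursatSnd, mem_mkSub]
      constructor
      · rintro ⟨h0, h2⟩
        have h3 : φ ⟨(0 : M), h0⟩ = 0 := by
          rw [show (⟨(0 : M), h0⟩ : A) = 0 from rfl, map_zero]
        rw [h3] at h2
        exact (QuotientAddGroup.eq_zero_iff _).mp h2
      · intro hk
        refine ⟨zero_mem _, ?_⟩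
        rw [show (⟨(0 : M), zero_mem A⟩ : A) = 0 from rfl, map_zero]
        exact (QuotientAddGroup.eq_zero_iff _).mpr hk
    refine sigma_hom_ext _ _ hA hK ?_
    intro x hx hx' y
    obtain ⟨w, hw, hw1⟩ := AddSubgroup.mem_map.mp hx
    have hw1' : w.1 = x := hw1
    have h3 : projHom (mkSub A K φ) ⟨x, hx⟩ = (w.2 : N ⧸ (mkSub A K φ).goursatSnd) := by
      rw [show (⟨x, hx⟩ : (mkSub A K φ).map (AddMonoidHom.fst M N)) = ⟨w.1, hw1' ▸ hx⟩ from
        Subtype.ext hw1'.symm]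
      exact projHom_eq _ hw _
    obtain ⟨h1, h2⟩ := mem_mkSub.mp hw
    have h4 : φ ⟨x, hx'⟩ = (w.2 : N ⧸ K) := by
      rw [h2]
      congr 1
      exact Subtype.ext hw1'.symm
    rw [h3, h4, QuotientAddGroup.eq_iff_sub_mem, QuotientAddGroup.eq_iff_sub_mem, hK]

end ProdEquiv


open AddSubgroup

noncomputable def nsmulHom (n m : ℕ) : ZMod m →+ ZMod m :=
  AddMonoidHom.mk' (fun x => n • x) (fun a b => smul_add n a b)

lemma range_nsmulHom (n m : ℕ) [NeZero m] :
    (nsmulHom n m).range = AddSubgroup.zmultiples ((n : ZMod m)) := by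
  ext x
  simp only [AddMonoidHom.mem_range, AddSubgroup.mem_zmultiples_iff]
  constructor
  · rintro ⟨y, rfl⟩
    refine ⟨(y.val : ℤ), ?_⟩
    show (y.val : ℤ) • (n : ZMod m) = n • y
    rw [zsmul_eq_mul, nsmul_eq_mul]
    push_cast
    rw [ZMod.natCast_val, ZMod.cast_id, mul_comm]
  · rintro ⟨k, rfl⟩
    refine ⟨(k : ZMod m), ?_⟩
    show n • (k : ZMod m) = k • (n : ZMod m)
    rw [nsmul_eq_mul, zsmul_eq_mul, mul_comm]

lemma card_ker_nsmulHom (n m : ℕ) [NeZero m] :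
    Nat.card (nsmulHom n m).ker = Nat.gcd m n := by
  have h1 : Nat.card (ZMod m) = Nat.card (ZMod m ⧸ (nsmulHom n m).ker) * Nat.card (nsmulHom n m).ker :=
    AddSubgroup.card_eq_card_quotient_mul_card_addSubgroup _
  have h2 : Nat.card (ZMod m ⧸ (nsmulHom n m).ker) = Nat.card (nsmulHom n m).range :=
    Nat.card_congr (QuotientAddGroup.quotientKerEquivRange (nsmulHom n m)).toEquiv
  have h3 : Nat.card (nsmulHom n m).range = m / Nat.gcd m n := by
    rw [range_nsmulHom, Nat.card_zmultiples, ZMod.addOrderOf_coe n (NeZero.ne m)]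
  have hm : Nat.card (ZMod m) = m := Nat.card_zmod m
  have hg : Nat.gcd m n ∣ m := Nat.gcd_dvd_left m n
  have hg0 : Nat.gcd m n ≠ 0 := fun h => NeZero.ne m (Nat.eq_zero_of_gcd_eq_zero_left h)
  have hd0 : m / Nat.gcd m n ≠ 0 := by
    intro h
    have := Nat.div_mul_cancel hg
    rw [h, zero_mul] at this
    exact NeZero.ne m this.symm
  rw [h2, h3, hm] at h1
  have h4 : m / (m / Nat.gcd m n) = Nat.card (nsmulHom n m).ker :=
    Nat.div_eq_of_eq_mul_right (Nat.pos_of_ne_zero hd0) h1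
  rw [← h4, Nat.div_div_self hg (NeZero.ne m)]

lemma card_torsion (n m : ℕ) [NeZero m] :
    Nat.card {x : ZMod m // n • x = 0} = Nat.gcd m n := by
  rw [← card_ker_nsmulHom n m]
  exact Nat.card_congr (Equiv.subtypeEquivRight (fun x => by
    simp [nsmulHom, AddMonoidHom.mem_ker]))

-- hom congruence
def homCongr {A B Q : Type*} [AddCommGroup A] [AddCommGroup B] [AddCommGroup Q]
    (e : A ≃+ B) : (A →+ Q) ≃ (B →+ Q) where
  toFun f := f.comp e.symm.toAddMonoidHom
  invFun g := g.comp e.toAddMonoidHom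
  left_inv f := by ext x; simp
  right_inv g := by ext x; simp

lemma card_hom_zmod (n : ℕ) {Q : Type*} [AddCommGroup Q] [Finite Q] [IsAddCyclic Q] :
    Nat.card (ZMod n →+ Q) = Nat.gcd (Nat.card Q) n := by
  have e1 : (ZMod n →+ Q) ≃ {f : ℤ →+ Q // f n = 0} := (ZMod.lift n).symm
  have e2 : {f : ℤ →+ Q // f n = 0} ≃ {x : Q // n • x = 0} :=
    ((zmultiplesHom Q).subtypeEquiv (fun x => by
      simp only [zmultiplesHom_apply]
      rw [natCast_zsmul])).symm
  have ec : ZMod (Nat.card Q) ≃+ Q := zmodAddCyclicAddEquiv inferInstance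
  have e3 : {x : Q // n • x = 0} ≃ {y : ZMod (Nat.card Q) // n • y = 0} :=
    (ec.toEquiv.subtypeEquiv (fun y => by
      rw [show ec.toEquiv y = ec y from rfl, ← map_nsmul, EmbeddingLike.map_eq_zero_iff])).symm
  have : NeZero (Nat.card Q) := ⟨Nat.card_pos.ne'⟩
  rw [Nat.card_congr (e1.trans (e2.trans e3)), card_torsion]

lemma card_hom_cyclic {A Q : Type*} [AddCommGroup A] [Finite A] [IsAddCyclic A]
    [AddCommGroup Q] [Finite Q] [IsAddCyclic Q] :
    Nat.card (A →+ Q) = Nat.gcd (Nat.card Q) (Nat.card A) := by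
  have ec : ZMod (Nat.card A) ≃+ A := zmodAddCyclicAddEquiv inferInstance
  rw [Nat.card_congr (homCongr (Q := Q) ec).symm, card_hom_zmod]

lemma subgroup_eq_ker {m : ℕ} [NeZero m] (A : AddSubgroup (ZMod m)) :
    A = (nsmulHom (Nat.card A) m).ker := by
  have hdvd : Nat.card A ∣ m := by
    have := AddSubgroup.card_addSubgroup_dvd_card A
    rwa [Nat.card_zmod] at this
  have hle : A ≤ (nsmulHom (Nat.card A) m).ker := by
    intro x hx
    have h1 : Nat.card A • (⟨x, hx⟩ : A) = 0 := card_nsmul_eq_zero'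
    have h2 : Nat.card A • x = 0 := by
      have h3 := congrArg (Subtype.val) h1
      rw [AddSubgroup.coe_nsmul] at h3
      simpa using h3
    exact h2
  refine AddSubgroup.eq_of_le_of_card_ge hle ?_
  rw [card_ker_nsmulHom, Nat.gcd_comm, Nat.gcd_eq_left hdvd]

noncomputable def subgroupEquivDivisors (m : ℕ) [NeZero m] :
    AddSubgroup (ZMod m) ≃ {d : ℕ // d ∈ m.divisors} where
  toFun A := ⟨Nat.card A, Nat.mem_divisors.mpr ⟨by
    have := AddSubgroup.card_addSubgroup_dvd_card A
    rwa [Nat.card_zmod] at this, NeZero.ne m⟩⟩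
  invFun d := (nsmulHom d.1 m).ker
  left_inv A := (subgroup_eq_ker A).symm
  right_inv d := by
    ext
    show Nat.card (nsmulHom d.1 m).ker = d.1
    rw [card_ker_nsmulHom, Nat.gcd_comm, Nat.gcd_eq_left (Nat.mem_divisors.mp d.2).1]

lemma card_subgroupEquivDivisors {m : ℕ} [NeZero m] (d : {d : ℕ // d ∈ m.divisors}) :
    Nat.card ((subgroupEquivDivisors m).symm d) = d.1 := by
  show Nat.card (nsmulHom d.1 m).ker = d.1
  rw [card_ker_nsmulHom, Nat.gcd_comm, Nat.gcd_eq_left (Nat.mem_divisors.mp d.2).1]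

open Finset

lemma sq_base (p : ℤ) (a : ℕ) :
    (∑ i ∈ range (a+1), ∑ j ∈ range (a+1), p^(min i j)) * (p-1)^2
      = p^(a+2) + p^(a+1) - (2*(a:ℤ)+3)*p + (2*(a:ℤ)+1) := by
  induction a with
  | zero => simp; ring
  | succ a ih =>
    have hrow : ∀ i ∈ range (a+1), (∑ j ∈ range (a+2), p^(min i j))
        = (∑ j ∈ range (a+1), p^(min i j)) + p^i := by
      intro i hi
      rw [mem_range] at hi
      rw [sum_range_succ]
      congr 2
      exact min_eq_left (by omega)  -- min i (a+1) = i since i ≤ a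
    have hcol : (∑ j ∈ range (a+2), p^(min (a+1) j))
        = (∑ j ∈ range (a+1), p^j) + p^(a+1) := by
      rw [sum_range_succ, min_self]
      congr 1
      refine sum_congr rfl (fun j hj => ?_)
      congr 1
      rw [mem_range] at hj
      omega
    have hgeom : (∑ i ∈ range (a+1), p^i) * (p-1) = p^(a+1) - 1 := geom_sum_mul p (a+1)
    have hsplit : (∑ i ∈ range (a+2), ∑ j ∈ range (a+2), p^(min i j))
        = (∑ i ∈ range (a+1), ∑ j ∈ range (a+1), p^(min i j))
          + 2 * (∑ i ∈ range (a+1), p^i) + p^(a+1) := by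
      rw [sum_range_succ, sum_congr rfl hrow, sum_add_distrib, hcol]
      ring
    rw [hsplit]
    push_cast
    linear_combination ih + 2*(p-1) * hgeom

lemma rect (p : ℤ) (a b : ℕ) (hab : a ≤ b) :
    (∑ i ∈ range (a+1), ∑ j ∈ range (b+1), p^(min i j)) * (p-1)^2
      = ((b:ℤ) - a + 1) * p ^ (a + 2) - ((b:ℤ) - a - 1) * p ^ (a + 1)
        - ((a:ℤ) + b + 3) * p + ((a:ℤ) + b + 1) := by
  induction b, hab using Nat.le_induction with
  | base =>
    rw [sq_base]
    push_cast
    ring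
  | succ b hab ih =>
    have hstep : (∑ i ∈ range (a+1), ∑ j ∈ range (b+2), p^(min i j))
        = (∑ i ∈ range (a+1), ∑ j ∈ range (b+1), p^(min i j))
          + ∑ i ∈ range (a+1), p^i := by
      rw [← sum_add_distrib]
      refine sum_congr rfl (fun i hi => ?_)
      rw [mem_range] at hi
      rw [sum_range_succ]
      congr 2
      exact min_eq_left (by omega)
    have hgeom : (∑ i ∈ range (a+1), p^i) * (p-1) = p^(a+1) - 1 := geom_sum_mul p (a+1)
    rw [hstep]
    push_cast
    linear_combination ih + (p-1) * hgeom

lemma nat_card_sigma {ι : Type*} [Fintype ι] (α : ι → Type*) [∀ i, Finite (α i)] :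
    Nat.card (Σ i, α i) = ∑ i, Nat.card (α i) := by
  letI : ∀ i, Fintype (α i) := fun i => Fintype.ofFinite (α i)
  rw [Nat.card_eq_fintype_card, Fintype.card_sigma]
  simp [Nat.card_eq_fintype_card]

lemma sum_subgroups {m : ℕ} [NeZero m] [Fintype (AddSubgroup (ZMod m))] (g : ℕ → ℕ) :
    (∑ A : AddSubgroup (ZMod m), g (Nat.card A)) = ∑ d ∈ m.divisors, g d := by
  rw [← Equiv.sum_comp (subgroupEquivDivisors m).symm (fun A => g (Nat.card A))]
  simp_rw [card_subgroupEquivDivisors]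
  exact Finset.sum_coe_sort m.divisors g

/-- `N(Z_{p^a} × Z_{p^b}) = ((b-a+1)p^{a+2} - (b-a-1)p^{a+1} - (a+b+3)p + (a+b+1))/(p-1)^2`
for `1 ≤ a ≤ b`, stated in `ℤ` in multiplied-out (division-free) form. -/
theorem number_of_subgroups_p_rank_two (p a b : ℕ) (hp : p.Prime) (ha : 1 ≤ a) (hab : a ≤ b) :
    (Nat.card (AddSubgroup (ZMod (p ^ a) × ZMod (p ^ b))) : ℤ) * ((p : ℤ) - 1) ^ 2 =
      ((b : ℤ) - a + 1) * (p : ℤ) ^ (a + 2) - ((b : ℤ) - a - 1) * (p : ℤ) ^ (a + 1)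
        - ((a : ℤ) + b + 3) * p + ((a : ℤ) + b + 1) := by
  have hp0 : p ≠ 0 := hp.ne_zero
  have hpa : NeZero (p ^ a) := ⟨pow_ne_zero a hp0⟩
  have hpb : NeZero (p ^ b) := ⟨pow_ne_zero b hp0⟩
  set M := ZMod (p ^ a)
  set N := ZMod (p ^ b)
  letI : Fintype (AddSubgroup M) := Fintype.ofFinite _
  letI : Fintype (AddSubgroup N) := Fintype.ofFinite _
  haveI hfin : ∀ (A : AddSubgroup M) (K : AddSubgroup N), Finite (A →+ N ⧸ K) :=
    fun A K => Finite.of_injective _ DFunLike.coe_injective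
  -- step 1: card as double sum
  have h1 : Nat.card (AddSubgroup (M × N))
      = ∑ A : AddSubgroup M, ∑ K : AddSubgroup N, Nat.card (A →+ N ⧸ K) := by
    rw [Nat.card_congr (subProdEquiv (M := M) (N := N)), nat_card_sigma]
    exact Finset.sum_congr rfl (fun A _ => nat_card_sigma _)
  -- step 2: summand as gcd
  have h2 : ∀ (A : AddSubgroup M) (K : AddSubgroup N),
      Nat.card (A →+ N ⧸ K) = Nat.gcd (p ^ b / Nat.card K) (Nat.card A) := by
    intro A K
    haveI : IsAddCyclic (N ⧸ K) :=
      isAddCyclic_of_surjective (QuotientAddGroup.mk' K) (QuotientAddGroup.mk'_surjective K)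
    rw [card_hom_cyclic]
    congr 1
    have := AddSubgroup.card_eq_card_quotient_mul_card_addSubgroup K
    rw [Nat.card_zmod] at this
    have hK0 : 0 < Nat.card K := Nat.card_pos
    exact (Nat.div_eq_of_eq_mul_left hK0 this).symm
  -- step 3: to divisor sums
  have h3 : Nat.card (AddSubgroup (M × N))
      = ∑ d ∈ (p ^ a).divisors, ∑ e ∈ (p ^ b).divisors, Nat.gcd (p ^ b / e) d := by
    rw [h1]
    rw [show (∑ A : AddSubgroup M, ∑ K : AddSubgroup N, Nat.card (A →+ N ⧸ K))
        = ∑ A : AddSubgroup M, ∑ K : AddSubgroup N, Nat.gcd (p ^ b / Nat.card K) (Nat.card A)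
      from Finset.sum_congr rfl (fun A _ => Finset.sum_congr rfl (fun K _ => h2 A K))]
    rw [show (∑ A : AddSubgroup M, ∑ K : AddSubgroup N, Nat.gcd (p ^ b / Nat.card K) (Nat.card A))
        = ∑ A : AddSubgroup M, ∑ e ∈ (p ^ b).divisors, Nat.gcd (p ^ b / e) (Nat.card A)
      from Finset.sum_congr rfl (fun A _ =>
        sum_subgroups (m := p ^ b) (fun e => Nat.gcd (p ^ b / e) (Nat.card A)))]
    exact sum_subgroups (m := p ^ a)
      (fun d => ∑ e ∈ (p ^ b).divisors, Nat.gcd (p ^ b / e) d)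
  -- step 4: reindex divisors of prime powers
  have h4 : Nat.card (AddSubgroup (M × N))
      = ∑ i ∈ range (a+1), ∑ j ∈ range (b+1), p ^ min i j := by
    rw [h3, Nat.sum_divisors_prime_pow hp]
    refine Finset.sum_congr rfl (fun i hi => ?_)
    rw [Nat.sum_divisors_prime_pow hp]
    rw [mem_range] at hi
    -- now ∑ j ∈ range (b+1), gcd (p^b / p^j) (p^i) = ∑ j ∈ range (b+1), p ^ min i j
    rw [← Finset.sum_range_reflect (fun j => p ^ min i j) (b+1)]
    refine Finset.sum_congr rfl (fun j hj => ?_)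
    rw [mem_range] at hj
    rw [Nat.pow_div (by omega) hp.pos]
    have : min i (b + 1 - 1 - j) = min (b - j) i := by omega
    rw [this]
    rcases Nat.le_total (b - j) i with h | h
    · rw [min_eq_left h, Nat.gcd_eq_left (pow_dvd_pow p h)]
    · rw [min_eq_right h, Nat.gcd_eq_right (pow_dvd_pow p h)]
  rw [h4]
  push_cast
  exact rect p a b hab
end

section
/- For a prime p and integers 0 ≤ c ≤ a ≤ b, the number of subgroups of order p^c of Z_{p^a} × Z_{p^b} equals (p^{c+1} − 1)/(p − 1). -/
open AddSubgroup

lemma card_zmult (p n k : ℕ) (hp : p.Prime) (hk : k ≤ n) :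
    Nat.card (zmultiples ((p^(n-k) : ℕ) : ZMod (p^n))) = p^k := by
  haveI : NeZero p := ⟨hp.ne_zero⟩
  rw [Nat.card_zmultiples, ZMod.addOrderOf_coe _ (pow_ne_zero _ hp.ne_zero),
    Nat.gcd_eq_right (pow_dvd_pow p (Nat.sub_le n k)),
    Nat.pow_div (Nat.sub_le n k) hp.pos]
  congr 1; omega

lemma zmod_subgroup_eq (p n k : ℕ) (hp : p.Prime) (hk : k ≤ n)
    (S : AddSubgroup (ZMod (p^n))) (hS : Nat.card S = p^k) :
    S = zmultiples ((p^(n-k) : ℕ) : ZMod (p^n)) := by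
  haveI : NeZero p := ⟨hp.ne_zero⟩
  have hle : S ≤ zmultiples ((p^(n-k) : ℕ) : ZMod (p^n)) := by
    intro x hx
    have h := card_nsmul_eq_zero' (x := (⟨x, hx⟩ : S))
    rw [hS] at h
    have h0 : (p^k) • x = 0 := congrArg Subtype.val h
    have hx' : ((x.val : ℕ) : ZMod (p^n)) = x := ZMod.natCast_rightInverse x
    have hc : (p^k) • x = ((p^k * x.val : ℕ) : ZMod (p^n)) := by
      nth_rewrite 1 [← hx']
      rw [nsmul_eq_mul]; push_cast; ring
    rw [hc, ZMod.natCast_eq_zero_iff] at h0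
    have hdvd : p^(n-k) ∣ x.val := by
      have h0' : p ^ k * p ^ (n-k) ∣ p ^ k * x.val := by
        rw [← pow_add, (by omega : k + (n-k) = n)]; exact h0
      exact (mul_dvd_mul_iff_left (pow_pos hp.pos k).ne').mp h0'
    obtain ⟨m, hm⟩ := hdvd
    rw [← hx', hm]
    have : ((p^(n-k) * m : ℕ) : ZMod (p^n)) = m • ((p^(n-k) : ℕ) : ZMod (p^n)) := by
      push_cast
      rw [nsmul_eq_mul]; ring
    rw [this]
    exact AddSubgroup.nsmul_mem _ (mem_zmultiples _) m
  exact AddSubgroup.eq_of_le_of_card_ge hle (by rw [hS, card_zmult p n k hp hk])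

section Hsub

variable (p a b c k t : ℕ)

def gOne : ZMod (p^a) × ZMod (p^b) := (((t * p^(a-c) : ℕ) : ZMod (p^a)), ((p^(b-k) : ℕ) : ZMod (p^b)))

def gTwo : ZMod (p^a) × ZMod (p^b) := (((p^(a-c+k) : ℕ) : ZMod (p^a)), 0)

def Hsub : AddSubgroup (ZMod (p^a) × ZMod (p^b)) :=
  closure {gOne p a b c k t, gTwo p a b c k}

lemma mem_Hsub {x : ZMod (p^a) × ZMod (p^b)} :
    x ∈ Hsub p a b c k t ↔ ∃ m n : ℤ, m • gOne p a b c k t + n • gTwo p a b c k = x :=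
  AddSubgroup.mem_closure_pair

lemma smul_comb (m n : ℤ) :
    m • gOne p a b c k t + n • gTwo p a b c k
      = (((m * t * p^(a-c) + n * p^(a-c+k) : ℤ) : ZMod (p^a)),
         ((m * p^(b-k) : ℤ) : ZMod (p^b))) := by
  simp only [gOne, gTwo, Prod.smul_mk, Prod.mk_add_mk, Prod.mk.injEq, smul_zero, add_zero,
    zsmul_eq_mul]
  constructor <;> push_cast <;> ring

lemma rel_one (hkb : k ≤ b) :
    (p^k : ℤ) • gOne p a b c k t = (t : ℤ) • gTwo p a b c k := by
  simp only [gOne, gTwo, Prod.smul_mk, Prod.mk.injEq, smul_zero, zsmul_eq_mul]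
  constructor
  · push_cast; ring
  · rw [show ((p^(b-k) : ℕ) : ZMod (p^b)) = (((p^(b-k) : ℕ) : ℤ) : ZMod (p^b)) by push_cast; rfl,
      ← Int.cast_mul, ZMod.intCast_zmod_eq_zero_iff_dvd]
    push_cast
    rw [← pow_add]
    exact ⟨1, by rw [mul_one]; congr 1; omega⟩

lemma rel_two (hkc : k ≤ c) (hca : c ≤ a) :
    (p^(c-k) : ℤ) • gTwo p a b c k = 0 := by
  simp only [gTwo, Prod.smul_mk, smul_zero, zsmul_eq_mul, Prod.mk_eq_zero, and_true]
  rw [show ((p^(a-c+k) : ℕ) : ZMod (p^a)) = (((p^(a-c+k) : ℕ) : ℤ) : ZMod (p^a)) by push_cast; rfl,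
    ← Int.cast_mul, ZMod.intCast_zmod_eq_zero_iff_dvd]
  push_cast
  rw [← pow_add]
  exact ⟨1, by rw [mul_one]; congr 1; omega⟩

end Hsub

lemma pow_dvd_cancel (p : ℕ) (hp : p ≠ 0) (N e f : ℕ) (hef : e + f = N) (z : ℤ)
    (h : (p:ℤ)^N ∣ z * (p:ℤ)^f) : (p:ℤ)^e ∣ z := by
  subst hef
  rw [pow_add] at h
  exact (mul_dvd_mul_iff_right (pow_ne_zero f (Int.natCast_ne_zero.mpr hp))).mp h

lemma card_Hsub (p a b c k t : ℕ) (hp : p.Prime) (hkc : k ≤ c) (hca : c ≤ a) (hab : a ≤ b) :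
    Nat.card (Hsub p a b c k t) = p ^ c := by
  haveI : NeZero p := ⟨hp.ne_zero⟩
  have ppos : (0:ℤ) < (p:ℤ)^k := pow_pos (by exact_mod_cast hp.pos) k
  have ppos2 : (0:ℤ) < (p:ℤ)^(c-k) := pow_pos (by exact_mod_cast hp.pos) (c-k)
  have hF : ∀ m n : ℤ, m • gOne p a b c k t + n • gTwo p a b c k ∈ Hsub p a b c k t :=
    fun m n => (mem_Hsub p a b c k t).mpr ⟨m, n, rfl⟩
  set F : Fin (p^k) × Fin (p^(c-k)) → Hsub p a b c k t := fun mn =>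
    ⟨((mn.1 : ℕ) : ℤ) • gOne p a b c k t + ((mn.2 : ℕ) : ℤ) • gTwo p a b c k, hF _ _⟩
    with hFdef
  have hbij : Function.Bijective F := by
    constructor
    · rintro ⟨m, n⟩ ⟨m', n'⟩ h
      have h' := congrArg Subtype.val h
      simp only [hFdef] at h'
      rw [smul_comb, smul_comb, Prod.mk.injEq] at h'
      obtain ⟨h1, h2⟩ := h'
      have hd2 : ((p:ℤ))^b ∣ ((m':ℤ) - m) * (p:ℤ)^(b-k) := by
        have := Int.ModEq.dvd ((ZMod.intCast_eq_intCast_iff _ _ _).mp h2)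
        push_cast at this ⊢
        convert this using 1
        ring
      have hmm : ((p:ℤ))^k ∣ ((m':ℤ) - m) :=
        pow_dvd_cancel p hp.ne_zero b k (b-k) (by omega) _ hd2
      have hm : (m:ℕ) = (m':ℕ) := by
        have hlt : |((m':ℤ) - m)| < (p:ℤ)^k := by
          rw [abs_lt]
          have h2m := m.2; have h2m' := m'.2
          have hpk : ((p^k : ℕ) : ℤ) = (p:ℤ)^k := by push_cast; ring
          constructor <;> omega
        have := Int.eq_zero_of_abs_lt_dvd hmm hlt
        omega
      have hn : (n:ℕ) = (n':ℕ) := by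
        rw [show ((m:ℕ):ℤ) = ((m':ℕ):ℤ) by exact_mod_cast hm] at h1
        have hd1 : ((p:ℤ))^a ∣ ((n':ℤ) - n) * (p:ℤ)^(a-c+k) := by
          have := Int.ModEq.dvd ((ZMod.intCast_eq_intCast_iff _ _ _).mp h1)
          push_cast at this ⊢
          convert this using 1
          ring
        have hnn : ((p:ℤ))^(c-k) ∣ ((n':ℤ) - n) :=
          pow_dvd_cancel p hp.ne_zero a (c-k) (a-c+k) (by omega) _ hd1
        have hlt : |((n':ℤ) - n)| < (p:ℤ)^(c-k) := by
          rw [abs_lt]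
          have h2n := n.2; have h2n' := n'.2
          have hpk : ((p^(c-k) : ℕ) : ℤ) = (p:ℤ)^(c-k) := by push_cast; ring
          constructor <;> omega
        have := Int.eq_zero_of_abs_lt_dvd hnn hlt
        omega
      exact Prod.ext (Fin.ext hm) (Fin.ext hn)
    · rintro ⟨x, hx⟩
      obtain ⟨m, n, hmn⟩ := (mem_Hsub p a b c k t).mp hx
      set q := m / ((p:ℤ)^k) with hqdef
      set r := m % ((p:ℤ)^k) with hrdef
      have hq : (p:ℤ)^k * q + r = m := Int.mul_ediv_add_emod m _
      have hr0 : 0 ≤ r := Int.emod_nonneg m ppos.ne'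
      have hrlt : r < (p:ℤ)^k := Int.emod_lt_of_pos m ppos
      set w := q * t + n with hwdef
      set q2 := w / ((p:ℤ)^(c-k)) with hq2def
      set s := w % ((p:ℤ)^(c-k)) with hsdef
      have hw : (p:ℤ)^(c-k) * q2 + s = w := Int.mul_ediv_add_emod w _
      have hs0 : 0 ≤ s := Int.emod_nonneg w ppos2.ne'
      have hslt : s < (p:ℤ)^(c-k) := Int.emod_lt_of_pos w ppos2
      have key : r • gOne p a b c k t + s • gTwo p a b c k = x := by
        rw [← hmn]
        have e1 : m • gOne p a b c k t
            = r • gOne p a b c k t + (q * t) • gTwo p a b c k := by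
          conv_lhs => rw [← hq]
          rw [add_smul, mul_comm ((p:ℤ)^k) q, mul_smul,
            rel_one p a b c k t (le_trans hkc (le_trans hca hab)), ← mul_smul, add_comm]
        have e2 : ((p:ℤ)^(c-k) * q2) • gTwo p a b c k = 0 := by
          rw [mul_comm, mul_smul, rel_two p a b c k hkc hca, smul_zero]
        rw [e1, add_assoc, ← add_smul, ← hwdef]
        conv_rhs => rw [← hw]
        rw [add_smul, e2, zero_add]
      refine ⟨(⟨r.toNat, ?_⟩, ⟨s.toNat, ?_⟩), ?_⟩
      · have hpk : ((p^k : ℕ) : ℤ) = (p:ℤ)^k := by push_cast; ring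
        have hpk2 : ((p^(c-k) : ℕ) : ℤ) = (p:ℤ)^(c-k) := by push_cast; ring
        omega
      · have hpk : ((p^k : ℕ) : ℤ) = (p:ℤ)^k := by push_cast; ring
        have hpk2 : ((p^(c-k) : ℕ) : ℤ) = (p:ℤ)^(c-k) := by push_cast; ring
        omega
      · apply Subtype.ext
        simp only [hFdef]
        rwa [Int.toNat_of_nonneg hr0, Int.toNat_of_nonneg hs0]
  have hcard := Nat.card_eq_of_bijective F hbij
  rw [← hcard, Nat.card_eq_fintype_card, Fintype.card_prod, Fintype.card_fin, Fintype.card_fin,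
    ← pow_add]
  congr 1
  omega

lemma map_snd_Hsub (p a b c k t : ℕ) :
    (Hsub p a b c k t).map (AddMonoidHom.snd (ZMod (p^a)) (ZMod (p^b)))
      = zmultiples ((p^(b-k) : ℕ) : ZMod (p^b)) := by
  rw [Hsub, AddMonoidHom.map_closure]
  have himg : (AddMonoidHom.snd (ZMod (p^a)) (ZMod (p^b))) ''
      {gOne p a b c k t, gTwo p a b c k} = {((p^(b-k) : ℕ) : ZMod (p^b)), 0} := by
    simp [gOne, gTwo, Set.image_pair]
  rw [himg, ← Set.singleton_union, AddSubgroup.closure_union, zmultiples_eq_closure]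
  simp only [sup_eq_left]
  rw [AddSubgroup.closure_le]
  intro z hz
  simp only [Set.mem_singleton_iff] at hz
  subst hz
  exact zero_mem _

lemma Hsub_inj (p a b c : ℕ) (hp : p.Prime) (hca : c ≤ a) (hab : a ≤ b)
    (k t k' t' : ℕ) (hkc : k ≤ c) (hkc' : k' ≤ c) (ht : t < p^k) (ht' : t' < p^k')
    (h : Hsub p a b c k t = Hsub p a b c k' t') : k = k' ∧ t = t' := by
  haveI : NeZero p := ⟨hp.ne_zero⟩
  have hkk : k = k' := by
    have h2 := congrArg (fun S => Nat.card
      (S.map (AddMonoidHom.snd (ZMod (p^a)) (ZMod (p^b))))) h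
    simp only [map_snd_Hsub] at h2
    rw [card_zmult p b k hp (le_trans hkc (le_trans hca hab)),
      card_zmult p b k' hp (le_trans hkc' (le_trans hca hab))] at h2
    exact Nat.pow_right_injective hp.two_le h2
  subst hkk
  refine ⟨rfl, ?_⟩
  -- gOne (t) ∈ Hsub k t'
  have hg1 : gOne p a b c k t ∈ Hsub p a b c k t' := by
    rw [← h]
    exact subset_closure (Set.mem_insert _ _)
  obtain ⟨m, n, hmn⟩ := (mem_Hsub p a b c k t').mp hg1
  rw [smul_comb] at hmn
  have hmn1 := congrArg Prod.fst hmn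
  have hmn2 := congrArg Prod.snd hmn
  simp only [gOne] at hmn1 hmn2
  -- second coordinate: p^k ∣ m - 1
  have hd2 : (p:ℤ)^b ∣ ((1:ℤ) - m) * (p:ℤ)^(b-k) := by
    rw [show ((p^(b-k) : ℕ) : ZMod (p^b)) = (((p^(b-k) : ℕ) : ℤ) : ZMod (p^b)) by push_cast; rfl]
      at hmn2
    have := Int.ModEq.dvd ((ZMod.intCast_eq_intCast_iff _ _ _).mp hmn2)
    push_cast at this ⊢
    convert this using 1
    ring
  have hm1 : (p:ℤ)^k ∣ (1:ℤ) - m :=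
    pow_dvd_cancel p hp.ne_zero b k (b-k) (by omega) _ hd2
  obtain ⟨e, he⟩ := hm1
  have hme : m = 1 - (p:ℤ)^k * e := by omega
  -- first coordinate
  have hd1 : (p:ℤ)^a ∣ ((t:ℤ) * p^(a-c) - (m * t' * p^(a-c) + n * p^(a-c+k))) := by
    rw [show ((t * p^(a-c) : ℕ) : ZMod (p^a)) = (((t * p^(a-c) : ℕ) : ℤ) : ZMod (p^a))
      by push_cast; rfl] at hmn1
    have := Int.ModEq.dvd ((ZMod.intCast_eq_intCast_iff _ _ _).mp hmn1)
    push_cast at this ⊢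
    convert this using 1
  have hZ : ((t:ℤ) * p^(a-c) - (m * t' * p^(a-c) + n * p^(a-c+k)))
      = (p:ℤ)^(a-c) * (((t:ℤ) - t') + (e * t' - n) * (p:ℤ)^k) := by
    have e2 : (p:ℤ)^(a-c+k) = (p:ℤ)^(a-c) * (p:ℤ)^k := by rw [pow_add]
    rw [hme, e2]; ring
  rw [hZ] at hd1
  have hd1'' : (p:ℤ)^(a-c) * (p:ℤ)^c ∣ (p:ℤ)^(a-c) * (((t:ℤ) - t') + (e * t' - n) * (p:ℤ)^k) := by
    rw [← pow_add, show (a-c) + c = a by omega]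
    exact hd1
  have hd1' : (p:ℤ)^c ∣ (((t:ℤ) - t') + (e * t' - n) * (p:ℤ)^k) :=
    (mul_dvd_mul_iff_left (pow_ne_zero (a-c) (Int.natCast_ne_zero.mpr hp.ne_zero))).mp hd1''
  have hdk : (p:ℤ)^k ∣ ((t:ℤ) - t') := by
    have h3 : (p:ℤ)^k ∣ (((t:ℤ) - t') + (e * t' - n) * (p:ℤ)^k) :=
      dvd_trans (pow_dvd_pow _ hkc) hd1'
    have h4 : (p:ℤ)^k ∣ (e * t' - n) * (p:ℤ)^k := dvd_mul_left _ _
    simpa using dvd_sub h3 h4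
  have hlt : |((t:ℤ) - t')| < (p:ℤ)^k := by
    rw [abs_lt]
    have hpk : ((p^k : ℕ) : ℤ) = (p:ℤ)^k := by push_cast; ring
    have htz : (t:ℤ) < (p:ℤ)^k := by rw [← hpk]; exact_mod_cast ht
    have htz' : (t':ℤ) < (p:ℤ)^k := by rw [← hpk]; exact_mod_cast ht'
    have ht0 : (0:ℤ) ≤ (t:ℤ) := Int.natCast_nonneg t
    have ht0' : (0:ℤ) ≤ (t':ℤ) := Int.natCast_nonneg t'
    constructor <;> omega
  have := Int.eq_zero_of_abs_lt_dvd hdk hlt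
  omega

lemma Hsub_surj (p a b c : ℕ) (hp : p.Prime) (hca : c ≤ a) (hab : a ≤ b)
    (H : AddSubgroup (ZMod (p^a) × ZMod (p^b))) (hH : Nat.card H = p^c) :
    ∃ k t, k ≤ c ∧ t < p^k ∧ H = Hsub p a b c k t := by
  haveI : NeZero p := ⟨hp.ne_zero⟩
  haveI : NeZero (p^a) := ⟨pow_ne_zero a hp.ne_zero⟩
  haveI : NeZero (p^b) := ⟨pow_ne_zero b hp.ne_zero⟩
  set f : H →+ ZMod (p^b) :=
    (AddMonoidHom.snd (ZMod (p^a)) (ZMod (p^b))).comp H.subtype with hfdef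
  have hsplit : Nat.card H = Nat.card (H ⧸ f.ker) * Nat.card f.ker :=
    AddSubgroup.card_eq_card_quotient_mul_card_addSubgroup f.ker
  have hquot : Nat.card (H ⧸ f.ker) = Nat.card f.range :=
    Nat.card_congr (QuotientAddGroup.quotientKerEquivRange f).toEquiv
  have hrange_dvd : Nat.card f.range ∣ p^c :=
    ⟨Nat.card f.ker, by rw [← hH, hsplit, hquot]⟩
  obtain ⟨k, hkc, hkcard⟩ := (Nat.dvd_prime_pow hp).mp hrange_dvd
  have hkercard : Nat.card f.ker = p^(c-k) := by
    have h1 : Nat.card f.range * Nat.card f.ker = p^k * p^(c-k) := by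
      rw [← hquot, ← hsplit, hH, ← pow_add]
      congr 1
      omega
    rw [hkcard] at h1
    exact Nat.eq_of_mul_eq_mul_left (pow_pos hp.pos k) h1
  have hrange_eq : f.range = zmultiples ((p^(b-k) : ℕ) : ZMod (p^b)) :=
    zmod_subgroup_eq p b k hp (le_trans hkc (le_trans hca hab)) f.range hkcard
  have hx : ∃ x : ZMod (p^a) × ZMod (p^b), x ∈ H ∧ x.2 = ((p^(b-k) : ℕ) : ZMod (p^b)) := by
    have : ((p^(b-k) : ℕ) : ZMod (p^b)) ∈ f.range := by
      rw [hrange_eq]; exact mem_zmultiples _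
    obtain ⟨z, hz⟩ := this
    exact ⟨z.1, z.2, hz⟩
  obtain ⟨x, hxH, hx2⟩ := hx
  -- the kernel gives the subgroup {u | (u,0) ∈ H} of ZMod (p^a)
  set S1 : AddSubgroup (ZMod (p^a)) :=
    H.comap (AddMonoidHom.inl (ZMod (p^a)) (ZMod (p^b))) with hS1def
  have hS1card : Nat.card S1 = p^(c-k) := by
    rw [← hkercard]
    apply Nat.card_congr
    refine Equiv.ofBijective
      (fun u : S1 => (⟨⟨((u : ZMod (p^a)), 0), u.2⟩, rfl⟩ : f.ker)) ⟨?_, ?_⟩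
    · intro u u' h
      apply Subtype.ext
      exact congrArg (fun z : f.ker => ((z : H) : ZMod (p^a) × ZMod (p^b)).1) h
    · intro z
      have hz2 : (((z : H) : ZMod (p^a) × ZMod (p^b))).2 = 0 := z.2
      have hpair : ((((z : H) : ZMod (p^a) × ZMod (p^b)).1 : ZMod (p^a)), (0 : ZMod (p^b)))
          = ((z : H) : ZMod (p^a) × ZMod (p^b)) := Prod.ext rfl hz2.symm
      refine ⟨⟨((z : H) : ZMod (p^a) × ZMod (p^b)).1, ?_⟩, ?_⟩
      · show ((((z : H) : ZMod (p^a) × ZMod (p^b)).1 : ZMod (p^a)), (0 : ZMod (p^b))) ∈ H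
        rw [hpair]
        exact (z : H).2
      · apply Subtype.ext
        apply Subtype.ext
        exact hpair
  have hS1eq : S1 = zmultiples ((p^(a-(c-k)) : ℕ) : ZMod (p^a)) :=
    zmod_subgroup_eq p a (c-k) hp (by omega) S1 hS1card
  have hg2 : gTwo p a b c k ∈ H := by
    have h1 : ((p^(a-(c-k)) : ℕ) : ZMod (p^a)) ∈ S1 := by
      rw [hS1eq]; exact mem_zmultiples _
    have h2 : (((p^(a-(c-k)) : ℕ) : ZMod (p^a)), (0 : ZMod (p^b))) ∈ H := h1
    rw [show a - (c-k) = a-c+k by omega] at h2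
    exact h2
  -- the first coordinate of x is divisible by p^(a-c)
  have hx1 : p^(a-c) ∣ (x.1).val := by
    have h0 : p^c • (⟨x, hxH⟩ : H) = 0 := by
      rw [← hH]; exact card_nsmul_eq_zero'
    have h1 : p^c • x = 0 := congrArg Subtype.val h0
    have h2 : p^c • x.1 = 0 := congrArg Prod.fst h1
    have hval : ((x.1.val : ℕ) : ZMod (p^a)) = x.1 := ZMod.natCast_rightInverse x.1
    have h3 : ((p^c * x.1.val : ℕ) : ZMod (p^a)) = 0 := by
      have heq : ((p^c * x.1.val : ℕ) : ZMod (p^a)) = p^c • x.1 := by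
        conv_rhs => rw [← hval]
        rw [nsmul_eq_mul]
        push_cast
        ring
      rw [heq, h2]
    rw [ZMod.natCast_eq_zero_iff] at h3
    have h4 : p^(a-c) * p^c ∣ p^c * x.1.val := by
      rw [← pow_add, show (a-c) + c = a by omega]
      exact h3
    rw [mul_comm (p^(a-c)) (p^c)] at h4
    exact (mul_dvd_mul_iff_left (pow_pos hp.pos c).ne').mp h4
  set t0 := x.1.val / p^(a-c) with ht0def
  have ht0 : x.1.val = p^(a-c) * t0 := (Nat.mul_div_cancel' hx1).symm
  set t := t0 % p^k with htdef
  have ht : t < p^k := Nat.mod_lt _ (pow_pos hp.pos k)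
  have hg1 : gOne p a b c k t ∈ H := by
    have hkey : x - (t0 / p^k) • gTwo p a b c k = gOne p a b c k t := by
      have hnat : p^(a-c) * t0 = t * p^(a-c) + (t0 / p^k) * p^(a-c+k) := by
        conv_lhs => rw [← Nat.div_add_mod t0 (p^k)]
        rw [pow_add]
        ring
      apply Prod.ext
      · show x.1 - (t0 / p^k) • ((p^(a-c+k) : ℕ) : ZMod (p^a)) = ((t * p^(a-c) : ℕ) : ZMod (p^a))
        have hval : ((x.1.val : ℕ) : ZMod (p^a)) = x.1 := ZMod.natCast_rightInverse x.1
        rw [← hval, ht0, sub_eq_iff_eq_add, nsmul_eq_mul, hnat]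
        push_cast
        ring
      · show x.2 - (t0 / p^k) • (0 : ZMod (p^b)) = ((p^(b-k) : ℕ) : ZMod (p^b))
        rw [smul_zero, sub_zero, hx2]
    rw [← hkey]
    exact sub_mem hxH (AddSubgroup.nsmul_mem H hg2 _)
  refine ⟨k, t, hkc, ht, ?_⟩
  have hle : Hsub p a b c k t ≤ H := by
    rw [Hsub]
    apply (AddSubgroup.closure_le _).mpr
    rintro z (hz | hz)
    · rw [hz]; exact hg1
    · rw [hz]; exact hg2
  exact (AddSubgroup.eq_of_le_of_card_ge hle
    (by rw [hH, card_Hsub p a b c k t hp hkc hca hab])).symm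

lemma geom_mul (p : ℕ) (hp : 1 ≤ p) (n : ℕ) :
    (∑ i ∈ Finset.range n, p^i) * (p-1) = p^n - 1 := by
  induction n with
  | zero => simp
  | succ n ih =>
    rw [Finset.sum_range_succ, add_mul, ih]
    have h1 : 1 ≤ p^n := Nat.one_le_pow _ _ (by omega)
    have h2 : p^(n+1) = p^n * p := pow_succ p n
    have h3 : p^n * (p-1) = p^n * p - p^n := by rw [Nat.mul_sub, mul_one]
    have h4 : p^n ≤ p^n * p := Nat.le_mul_of_pos_right _ (by omega)
    omega

/-- For `0 ≤ c ≤ a ≤ b` (with `a ≥ 1`), the number of subgroups of order `p^c` of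
`Z_{p^a} × Z_{p^b}` equals `(p^{c+1} - 1)/(p - 1)`, stated in division-free form. -/
theorem number_of_subgroups_order_pc_case1 (p a b c : ℕ) (hp : p.Prime) (ha : 1 ≤ a)
    (hca : c ≤ a) (hab : a ≤ b) :
    Nat.card {H : AddSubgroup (ZMod (p ^ a) × ZMod (p ^ b)) // Nat.card H = p ^ c}
      * (p - 1) = p ^ (c + 1) - 1 := by
  haveI : NeZero p := ⟨hp.ne_zero⟩
  set E : (Σ k : Fin (c+1), Fin (p^(k:ℕ))) →
      {H : AddSubgroup (ZMod (p ^ a) × ZMod (p ^ b)) // Nat.card H = p ^ c} :=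
    fun x => ⟨Hsub p a b c x.1 x.2,
      card_Hsub p a b c x.1 x.2 hp (by omega) hca hab⟩ with hEdef
  have hbij : Function.Bijective E := by
    constructor
    · rintro ⟨k, t⟩ ⟨k', t'⟩ h
      have h' : Hsub p a b c k t = Hsub p a b c k' t' := congrArg Subtype.val h
      obtain ⟨hk, ht⟩ := Hsub_inj p a b c hp hca hab k t k' t'
        (by omega) (by omega) t.2 t'.2 h'
      have hk' : k = k' := Fin.ext hk
      subst hk'
      have ht' : t = t' := Fin.ext ht
      subst ht'
      rfl
    · rintro ⟨H, hH⟩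
      obtain ⟨k, t, hkc, ht, hHeq⟩ := Hsub_surj p a b c hp hca hab H hH
      exact ⟨⟨⟨k, by omega⟩, ⟨t, ht⟩⟩, Subtype.ext hHeq.symm⟩
  have hcard := Nat.card_eq_of_bijective E hbij
  rw [← hcard, Nat.card_eq_fintype_card, Fintype.card_sigma]
  simp only [Fintype.card_fin]
  rw [Fin.sum_univ_eq_sum_range (fun i => p^i) (c+1)]
  exact geom_mul p hp.one_lt.le (c+1)
end

section
/- For a prime p and integers 1 ≤ a ≤ c ≤ b, the number of subgroups of order p^c of Z_{p^a} × Z_{p^b} equals (p^{a+1} − 1)/(p − 1). -/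
open AddSubgroup

namespace SubgroupCountAux

/-- From an equality of integer casts in `ZMod n`, deduce divisibility. -/
lemma dvd_sub_of_zmod_eq {n : ℕ} {x y : ℤ} (h : ((x : ZMod n)) = (y : ZMod n)) :
    (n : ℤ) ∣ y - x :=
  ((ZMod.intCast_eq_intCast_iff _ _ _).mp h).dvd

lemma mem_zmultiples_cast_iff {n d : ℕ} [NeZero n] (hd : d ∣ n) (x : ZMod n) :
    x ∈ zmultiples ((d : ZMod n)) ↔ d ∣ x.val := by
  constructor
  · intro hx
    obtain ⟨m, hm⟩ := mem_zmultiples_iff.mp hx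
    have hx2 : ((m * d : ℤ) : ZMod n) = ((x.val : ℤ) : ZMod n) := by
      push_cast
      rw [ZMod.natCast_val, ZMod.cast_id, ← hm, zsmul_eq_mul]
    have h1 : (n : ℤ) ∣ (x.val : ℤ) - m * d := dvd_sub_of_zmod_eq hx2
    have h2 : (d : ℤ) ∣ (x.val : ℤ) := by
      have hdz : (d : ℤ) ∣ (n : ℤ) := Int.natCast_dvd_natCast.mpr hd
      have h3 := hdz.trans h1
      have h4 := dvd_add h3 (Dvd.intro_left m rfl)
      simpa using h4
    exact_mod_cast h2
  · intro hdx
    obtain ⟨e, he⟩ := hdx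
    refine mem_zmultiples_iff.mpr ⟨e, ?_⟩
    have hx : ((d * e : ℕ) : ZMod n) = x := by
      rw [← he, ZMod.natCast_val, ZMod.cast_id]
    rw [← hx, zsmul_eq_mul]
    push_cast
    ring

lemma addOrderOf_cast_pow {p : ℕ} (hp : p.Prime) {s t : ℕ} (hts : t ≤ s) :
    addOrderOf ((p ^ t : ℕ) : ZMod (p ^ s)) = p ^ (s - t) := by
  have h0 : (p : ℕ) ^ s ≠ 0 := pow_ne_zero _ hp.ne_zero
  rw [ZMod.addOrderOf_coe _ h0, Nat.gcd_eq_right (pow_dvd_pow p hts),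
    Nat.pow_div hts hp.pos]

lemma card_zmultiples_cast_pow {p : ℕ} (hp : p.Prime) {s t : ℕ} (hts : t ≤ s) :
    Nat.card (zmultiples ((p ^ t : ℕ) : ZMod (p ^ s))) = p ^ (s - t) := by
  rw [Nat.card_zmultiples, addOrderOf_cast_pow hp hts]


lemma eq_zmultiples_of_card {p : ℕ} (hp : p.Prime) {s k : ℕ} (hk : k ≤ s)
    (A : AddSubgroup (ZMod (p ^ s))) (hA : Nat.card A = p ^ k) :
    A = zmultiples ((p ^ (s - k) : ℕ) : ZMod (p ^ s)) := by
  haveI : NeZero (p ^ s) := ⟨pow_ne_zero _ hp.ne_zero⟩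
  have hle : A ≤ zmultiples ((p ^ (s - k) : ℕ) : ZMod (p ^ s)) := by
    intro x hx
    rw [mem_zmultiples_cast_iff (pow_dvd_pow p (Nat.sub_le s k))]
    -- first : p ^ k • x = 0
    have h1 : (p ^ k : ℕ) • x = 0 := by
      have hdvd : addOrderOf (⟨x, hx⟩ : A) ∣ p ^ k := hA ▸ addOrderOf_dvd_natCard _
      have h2 : (p ^ k : ℕ) • (⟨x, hx⟩ : A) = 0 := addOrderOf_dvd_iff_nsmul_eq_zero.mp hdvd
      exact congrArg Subtype.val h2
    have h3 : ((p ^ k * x.val : ℕ) : ZMod (p ^ s)) = 0 := by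
      push_cast
      rw [ZMod.natCast_val, ZMod.cast_id]
      have h1' := h1
      rw [nsmul_eq_mul] at h1'
      exact_mod_cast h1'
    have h4 : p ^ s ∣ p ^ k * x.val := (ZMod.natCast_eq_zero_iff _ _).mp h3
    have h5 : p ^ k * p ^ (s - k) ∣ p ^ k * x.val := by
      rwa [← pow_add, Nat.add_sub_cancel' hk]
    exact (Nat.mul_dvd_mul_iff_left (pow_pos hp.pos k)).mp h5
  refine AddSubgroup.eq_of_le_of_card_ge hle ?_
  rw [hA, card_zmultiples_cast_pow hp (Nat.sub_le s k), Nat.sub_sub_self hk]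

lemma card_prod_subgroup {G₁ G₂ : Type*} [AddGroup G₁] [AddGroup G₂]
    (H : AddSubgroup (G₁ × G₂)) :
    Nat.card H = Nat.card (H.map (AddMonoidHom.fst G₁ G₂))
      * Nat.card (H.comap (AddMonoidHom.inr G₁ G₂)) := by
  set f : H →+ G₁ := (AddMonoidHom.fst G₁ G₂).comp H.subtype with hf
  have h1 : Nat.card H = Nat.card (H ⧸ f.ker) * Nat.card f.ker :=
    AddSubgroup.card_eq_card_quotient_mul_card_addSubgroup f.ker
  have h2 : Nat.card (H ⧸ f.ker) = Nat.card f.range :=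
    Nat.card_congr (QuotientAddGroup.quotientKerEquivRange f).toEquiv
  have h3 : f.range = H.map (AddMonoidHom.fst G₁ G₂) := by
    rw [hf, AddMonoidHom.range_comp, AddSubgroup.range_subtype]
  have h4 : Nat.card f.ker = Nat.card (H.comap (AddMonoidHom.inr G₁ G₂)) := by
    refine Nat.card_congr ⟨fun x => ⟨(x.1.1 : G₁ × G₂).2, ?_⟩,
      fun y => ⟨⟨((0 : G₁), (y.1 : G₂)), y.2⟩, ?_⟩, ?_, ?_⟩
    · have h0 : (x.1.1 : G₁ × G₂).1 = 0 := x.2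
      have heq : ((0 : G₁), (x.1.1 : G₁ × G₂).2) = (x.1.1 : G₁ × G₂) := by
        rw [← h0]
      simpa [AddSubgroup.mem_comap, AddMonoidHom.inr_apply, heq] using x.1.2
    · rfl
    · intro x
      apply Subtype.ext; apply Subtype.ext
      have h0 : (x.1.1 : G₁ × G₂).1 = 0 := x.2
      exact Prod.ext h0.symm rfl
    · intro y
      rfl
  rw [h1, h2, h3, h4]


/-- first generator -/
def g (p a b c k u : ℕ) : ZMod (p ^ a) × ZMod (p ^ b) :=
  (((p ^ (a - k) : ℕ) : ZMod (p ^ a)), ((u * p ^ (b - c) : ℕ) : ZMod (p ^ b)))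

/-- second generator -/
def e (p a b c k : ℕ) : ZMod (p ^ a) × ZMod (p ^ b) :=
  (0, ((p ^ (b - c + k) : ℕ) : ZMod (p ^ b)))

/-- the subgroup generated by `g` and `e` -/
def Hk (p a b c k u : ℕ) : AddSubgroup (ZMod (p ^ a) × ZMod (p ^ b)) :=
  ((zmultiplesHom _ (g p a b c k u)).coprod (zmultiplesHom _ (e p a b c k))).range

lemma mem_Hk {p a b c k u : ℕ} {x : ZMod (p ^ a) × ZMod (p ^ b)} :
    x ∈ Hk p a b c k u ↔ ∃ m n : ℤ, m • g p a b c k u + n • e p a b c k = x := by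
  constructor
  · rintro ⟨⟨m, n⟩, rfl⟩; exact ⟨m, n, rfl⟩
  · rintro ⟨m, n, rfl⟩; exact ⟨(m, n), rfl⟩

lemma g_mem {p a b c k u : ℕ} : g p a b c k u ∈ Hk p a b c k u :=
  mem_Hk.mpr ⟨1, 0, by simp⟩

lemma e_mem {p a b c k u : ℕ} : e p a b c k ∈ Hk p a b c k u :=
  mem_Hk.mpr ⟨0, 1, by simp⟩

lemma Hk_le_iff {p a b c k u : ℕ} {S : AddSubgroup (ZMod (p ^ a) × ZMod (p ^ b))} :
    Hk p a b c k u ≤ S ↔ g p a b c k u ∈ S ∧ e p a b c k ∈ S := by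
  constructor
  · intro h; exact ⟨h g_mem, h e_mem⟩
  · rintro ⟨hg, he⟩ x hx
    obtain ⟨m, n, rfl⟩ := mem_Hk.mp hx
    exact AddSubgroup.add_mem _ (AddSubgroup.zsmul_mem _ hg m) (AddSubgroup.zsmul_mem _ he n)

lemma Hk_map_fst (p a b c k u : ℕ) :
    (Hk p a b c k u).map (AddMonoidHom.fst _ _)
      = zmultiples ((p ^ (a - k) : ℕ) : ZMod (p ^ a)) := by
  ext x
  simp only [AddSubgroup.mem_map]
  constructor
  · rintro ⟨y, hy, rfl⟩
    obtain ⟨m, n, rfl⟩ := mem_Hk.mp hy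
    refine mem_zmultiples_iff.mpr ⟨m, ?_⟩
    simp [g, e]
  · intro hx
    obtain ⟨m, hm⟩ := mem_zmultiples_iff.mp hx
    exact ⟨m • g p a b c k u, mem_Hk.mpr ⟨m, 0, by simp⟩, by simpa [g] using hm⟩


lemma zsmul_cast_eq_zero {p : ℕ} (hp : p.Prime) {s t : ℕ} (hts : t ≤ s) {m : ℤ}
    (h : m • ((p ^ t : ℕ) : ZMod (p ^ s)) = 0) : (p ^ (s - t) : ℤ) ∣ m := by
  have h2 := addOrderOf_dvd_iff_zsmul_eq_zero.mpr h
  rw [addOrderOf_cast_pow hp hts] at h2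
  exact_mod_cast h2

lemma Hk_comap_inr {p : ℕ} (a b c k u : ℕ) (hp : p.Prime) (hk : k ≤ a) (hac : a ≤ c)
    (hcb : c ≤ b) :
    (Hk p a b c k u).comap (AddMonoidHom.inr _ _)
      = zmultiples ((p ^ (b - c + k) : ℕ) : ZMod (p ^ b)) := by
  ext y
  simp only [AddSubgroup.mem_comap, AddMonoidHom.inr_apply]
  constructor
  · intro hy
    obtain ⟨m, n, hmn⟩ := mem_Hk.mp hy
    have h1 : m • ((p ^ (a - k) : ℕ) : ZMod (p ^ a)) = 0 := by
      have := congrArg Prod.fst hmn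
      simpa [g, e] using this
    have h2 : (p ^ k : ℤ) ∣ m := by
      have h3 := zsmul_cast_eq_zero hp (Nat.sub_le a k) h1
      rwa [Nat.sub_sub_self hk] at h3
    obtain ⟨m', rfl⟩ := h2
    have h4 : ((p : ℤ) ^ k * m') • ((u * p ^ (b - c) : ℕ) : ZMod (p ^ b))
        + n • ((p ^ (b - c + k) : ℕ) : ZMod (p ^ b)) = y := by
      have := congrArg Prod.snd hmn
      simpa [g, e] using this
    refine mem_zmultiples_iff.mpr ⟨m' * u + n, ?_⟩
    rw [← h4]
    simp only [zsmul_eq_mul]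
    push_cast [pow_add]
    ring
  · intro hy
    obtain ⟨n, hn⟩ := mem_zmultiples_iff.mp hy
    refine mem_Hk.mpr ⟨0, n, ?_⟩
    rw [← hn]
    simp [e, Prod.ext_iff]

lemma card_Hk {p : ℕ} (a b c k u : ℕ) (hp : p.Prime) (hk : k ≤ a) (hac : a ≤ c)
    (hcb : c ≤ b) : Nat.card (Hk p a b c k u) = p ^ c := by
  have hbck : b - c + k ≤ b := by omega
  rw [card_prod_subgroup, Hk_map_fst, Hk_comap_inr a b c k u hp hk hac hcb,
    card_zmultiples_cast_pow hp (Nat.sub_le a k),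
    card_zmultiples_cast_pow hp hbck,
    Nat.sub_sub_self hk, show b - (b - c + k) = c - k by omega, ← pow_add,
    Nat.add_sub_cancel' (le_trans hk hac)]


lemma g_add (p a b c k u t : ℕ) :
    g p a b c k (u + t * p ^ k) = g p a b c k u + t • e p a b c k := by
  unfold g e
  refine Prod.ext ?_ ?_
  · simp
  · show ((((u + t * p ^ k) * p ^ (b - c) : ℕ)) : ZMod (p ^ b))
      = ((u * p ^ (b - c) : ℕ) : ZMod (p ^ b)) + t • ((p ^ (b - c + k) : ℕ) : ZMod (p ^ b))
    rw [nsmul_eq_mul]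
    push_cast [pow_add]
    ring

lemma Hk_add_mul (p a b c k u t : ℕ) :
    Hk p a b c k (u + t * p ^ k) = Hk p a b c k u := by
  refine le_antisymm (Hk_le_iff.mpr ⟨?_, e_mem⟩) (Hk_le_iff.mpr ⟨?_, e_mem⟩)
  · rw [g_add]
    exact AddSubgroup.add_mem _ g_mem (AddSubgroup.nsmul_mem _ e_mem t)
  · have : g p a b c k u = g p a b c k (u + t * p ^ k) - t • e p a b c k := by
      rw [g_add]; abel
    rw [this]
    exact AddSubgroup.sub_mem _ g_mem (AddSubgroup.nsmul_mem _ e_mem t)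

lemma Hk_mod (p a b c k u : ℕ) :
    Hk p a b c k u = Hk p a b c k (u % p ^ k) := by
  conv_lhs => rw [← Nat.mod_add_div' u (p ^ k)]
  exact Hk_add_mul p a b c k (u % p ^ k) (u / p ^ k)

lemma Hk_inj {p : ℕ} (a b c k k' u u' : ℕ) (hp : p.Prime) (hk : k ≤ a) (hk' : k' ≤ a)
    (hac : a ≤ c) (hcb : c ≤ b) (h : Hk p a b c k u = Hk p a b c k' u') :
    k = k' ∧ u ≡ u' [MOD p ^ k] := by
  have hkk : k = k' := by
    have h1 := congrArg (fun S : AddSubgroup (ZMod (p ^ a) × ZMod (p ^ b)) =>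
      Nat.card (S.map (AddMonoidHom.fst _ _))) h
    simp only [Hk_map_fst] at h1
    rw [card_zmultiples_cast_pow hp (Nat.sub_le a k),
      card_zmultiples_cast_pow hp (Nat.sub_le a k'),
      Nat.sub_sub_self hk, Nat.sub_sub_self hk'] at h1
    exact Nat.pow_right_injective hp.two_le h1
  subst hkk
  refine ⟨rfl, ?_⟩
  have hg' : g p a b c k u' ∈ Hk p a b c k u := h ▸ g_mem
  obtain ⟨m, n, hmn⟩ := mem_Hk.mp hg'
  -- first coordinate
  have h1 : m • ((p ^ (a - k) : ℕ) : ZMod (p ^ a)) = ((p ^ (a - k) : ℕ) : ZMod (p ^ a)) := by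
    have := congrArg Prod.fst hmn
    simpa [g, e] using this
  have h2 : (p ^ k : ℤ) ∣ m - 1 := by
    have h3 : (m - 1) • ((p ^ (a - k) : ℕ) : ZMod (p ^ a)) = 0 := by
      rw [sub_smul, one_smul, h1, sub_self]
    have h4 := zsmul_cast_eq_zero hp (Nat.sub_le a k) h3
    rwa [Nat.sub_sub_self hk] at h4
  -- second coordinate
  have h5 : m • ((u * p ^ (b - c) : ℕ) : ZMod (p ^ b))
      + n • ((p ^ (b - c + k) : ℕ) : ZMod (p ^ b))
      = ((u' * p ^ (b - c) : ℕ) : ZMod (p ^ b)) := by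
    have := congrArg Prod.snd hmn
    simpa [g, e] using this
  have h6 : (((m * u * p ^ (b - c) + n * p ^ (b - c + k) : ℤ)) : ZMod (p ^ b))
      = (((u' * p ^ (b - c) : ℤ)) : ZMod (p ^ b)) := by
    simp only [zsmul_eq_mul] at h5
    push_cast
    push_cast at h5
    linear_combination h5
  have h7 := dvd_sub_of_zmod_eq h6
  have h8 : ((u' : ℤ) * p ^ (b - c) - (m * u * p ^ (b - c) + n * p ^ (b - c + k)))
      = p ^ (b - c) * ((u' : ℤ) - m * u - n * p ^ k) := by
    push_cast [pow_add]
    ring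
  have h9 : ((p : ℤ) ^ (b - c) * p ^ c) ∣ p ^ (b - c) * ((u' : ℤ) - m * u - n * p ^ k) := by
    rw [← h8, ← pow_add, Nat.sub_add_cancel hcb]
    exact_mod_cast h7
  have h10 : (p ^ c : ℤ) ∣ ((u' : ℤ) - m * u - n * p ^ k) :=
    (mul_dvd_mul_iff_left (a := (p : ℤ) ^ (b - c))
      (pow_ne_zero _ (by exact_mod_cast hp.ne_zero))).mp h9
  have h11 : (p ^ k : ℤ) ∣ ((u' : ℤ) - m * u - n * p ^ k) :=
    (pow_dvd_pow (p : ℤ) (hk.trans hac)).trans h10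
  have h12 : (p ^ k : ℤ) ∣ (u' : ℤ) - (u : ℤ) := by
    have h13 : (u' : ℤ) - u = ((u' : ℤ) - m * u - n * p ^ k) + (m - 1) * u + n * p ^ k := by
      ring
    rw [h13]
    exact dvd_add (dvd_add h11 (h2.mul_right _)) (Dvd.intro_left n rfl)
  exact (Nat.modEq_iff_dvd).mpr (by exact_mod_cast h12)


lemma Hk_surj {p : ℕ} (a b c : ℕ) (hp : p.Prime) (hac : a ≤ c) (hcb : c ≤ b)
    (H : AddSubgroup (ZMod (p ^ a) × ZMod (p ^ b))) (hH : Nat.card H = p ^ c) :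
    ∃ k, k ≤ a ∧ ∃ u, u < p ^ k ∧ H = Hk p a b c k u := by
  haveI : NeZero (p ^ a) := ⟨pow_ne_zero _ hp.ne_zero⟩
  haveI : NeZero (p ^ b) := ⟨pow_ne_zero _ hp.ne_zero⟩
  set A := H.map (AddMonoidHom.fst _ _) with hA'
  set B := H.comap (AddMonoidHom.inr _ _) with hB'
  have hcard : Nat.card A * Nat.card B = p ^ c := by
    rw [← card_prod_subgroup, hH]
  have hAdvd : Nat.card A ∣ p ^ a := by
    have h1 := AddSubgroup.card_addSubgroup_dvd_card A
    rwa [Nat.card_zmod] at h1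
  obtain ⟨k, hk, hA⟩ := (Nat.dvd_prime_pow hp).mp hAdvd
  have hkc : k ≤ c := hk.trans hac
  have hAeq : A = zmultiples ((p ^ (a - k) : ℕ) : ZMod (p ^ a)) :=
    eq_zmultiples_of_card hp hk A hA
  have hB : Nat.card B = p ^ (c - k) := by
    have h1 : p ^ k * Nat.card B = p ^ c := by rw [← hA]; exact hcard
    have h2 : p ^ c = p ^ k * p ^ (c - k) := by
      rw [← pow_add, Nat.add_sub_cancel' hkc]
    exact Nat.eq_of_mul_eq_mul_left (pow_pos hp.pos k) (h1.trans h2)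
  have hck : c - k ≤ b := le_trans (Nat.sub_le c k) hcb
  have hBeq : B = zmultiples ((p ^ (b - c + k) : ℕ) : ZMod (p ^ b)) := by
    have := eq_zmultiples_of_card hp hck B hB
    rwa [show b - (c - k) = b - c + k by omega] at this
  -- pick h0 ∈ H with first coordinate p ^ (a - k)
  have hgen : ((p ^ (a - k) : ℕ) : ZMod (p ^ a)) ∈ A := by
    rw [hAeq]; exact AddSubgroup.mem_zmultiples _
  obtain ⟨h0, hh0, hfst0⟩ := AddSubgroup.mem_map.mp hgen
  have hfst : h0.1 = ((p ^ (a - k) : ℕ) : ZMod (p ^ a)) := hfst0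
  have hbck : b - c + k ≤ b := by omega
  -- p ^ k • h0 has zero first coordinate
  have hsm1 : ((p ^ k : ℕ) • h0).1 = 0 := by
    have : ((p ^ k : ℕ) • h0).1 = (p ^ k : ℕ) • h0.1 := rfl
    rw [this, hfst, nsmul_eq_mul]
    have h2 : ((p ^ k * p ^ (a - k) : ℕ) : ZMod (p ^ a)) = 0 := by
      rw [← pow_add, Nat.add_sub_cancel' hk]
      exact ZMod.natCast_self _
    push_cast at h2 ⊢
    exact h2
  have hsm2 : (p ^ k : ℕ) • h0.2 ∈ B := by
    rw [hB']
    have heq : (AddMonoidHom.inr (ZMod (p ^ a)) (ZMod (p ^ b))) ((p ^ k : ℕ) • h0.2)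
        = (p ^ k : ℕ) • h0 := by
      refine Prod.ext ?_ rfl
      exact hsm1.symm
    rw [AddSubgroup.mem_comap, heq]
    exact AddSubgroup.nsmul_mem H hh0 _
  -- divisibility
  have hdvd1 : p ^ (b - c + k) ∣ ((p ^ k : ℕ) • h0.2).val := by
    rw [hBeq, mem_zmultiples_cast_iff (pow_dvd_pow p hbck)] at hsm2
    exact hsm2
  have hval : ((p ^ k : ℕ) • h0.2).val = (p ^ k * h0.2.val) % p ^ b := by
    have h3 : (p ^ k : ℕ) • h0.2 = ((p ^ k * h0.2.val : ℕ) : ZMod (p ^ b)) := by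
      rw [nsmul_eq_mul]
      push_cast
      rw [ZMod.natCast_val, ZMod.cast_id]
    rw [h3, ZMod.val_natCast]
  have hdvd2 : p ^ (b - c + k) ∣ p ^ k * h0.2.val := by
    rw [hval] at hdvd1
    exact (Nat.dvd_mod_iff (pow_dvd_pow p hbck)).mp hdvd1
  have hdvd3 : p ^ (b - c) ∣ h0.2.val := by
    have h4 : p ^ k * p ^ (b - c) ∣ p ^ k * h0.2.val := by
      rwa [← pow_add, show k + (b - c) = b - c + k by omega]
    exact (Nat.mul_dvd_mul_iff_left (pow_pos hp.pos k)).mp h4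
  set u := h0.2.val / p ^ (b - c) with hu'
  have hu : u * p ^ (b - c) = h0.2.val := Nat.div_mul_cancel hdvd3
  have hg : g p a b c k u = h0 := by
    refine Prod.ext hfst.symm ?_
    show ((u * p ^ (b - c) : ℕ) : ZMod (p ^ b)) = h0.2
    rw [hu, ZMod.natCast_val, ZMod.cast_id]
  have hemem : e p a b c k ∈ H := by
    have h5 : ((p ^ (b - c + k) : ℕ) : ZMod (p ^ b)) ∈ B := by
      rw [hBeq]; exact AddSubgroup.mem_zmultiples _
    rw [hB', AddSubgroup.mem_comap] at h5
    exact h5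
  have hle : Hk p a b c k u ≤ H := Hk_le_iff.mpr ⟨hg ▸ hh0, hemem⟩
  have hHeq : H = Hk p a b c k u := by
    refine (AddSubgroup.eq_of_le_of_card_ge hle ?_).symm
    rw [hH, card_Hk a b c k u hp hk hac hcb]
  refine ⟨k, hk, u % p ^ k, Nat.mod_lt _ (pow_pos hp.pos k), ?_⟩
  rw [hHeq, Hk_mod]

end SubgroupCountAux

/-- For `1 ≤ a ≤ c ≤ b`, the number of subgroups of order `p^c` of
`Z_{p^a} × Z_{p^b}` equals `(p^{a+1} - 1)/(p - 1)`, stated in division-free form. -/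
theorem number_of_subgroups_order_pc_case2 (p a b c : ℕ) (hp : p.Prime) (ha : 1 ≤ a)
    (hac : a ≤ c) (hcb : c ≤ b) :
    Nat.card {H : AddSubgroup (ZMod (p ^ a) × ZMod (p ^ b)) // Nat.card H = p ^ c}
      * (p - 1) = p ^ (a + 1) - 1 := by
  classical
  haveI : NeZero (p ^ a) := ⟨pow_ne_zero _ hp.ne_zero⟩
  haveI : NeZero (p ^ b) := ⟨pow_ne_zero _ hp.ne_zero⟩
  haveI inst3 : ∀ k : Fin (a + 1), NeZero (p ^ (k : ℕ)) :=
    fun _ => ⟨pow_ne_zero _ hp.ne_zero⟩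
  open SubgroupCountAux in
  have key : Nat.card {H : AddSubgroup (ZMod (p ^ a) × ZMod (p ^ b)) // Nat.card H = p ^ c}
      = Nat.card ((k : Fin (a + 1)) × ZMod (p ^ (k : ℕ))) := by
    refine (Nat.card_congr (Equiv.ofBijective
      (fun x : (k : Fin (a + 1)) × ZMod (p ^ (k : ℕ)) =>
        (⟨Hk p a b c x.1 x.2.val,
          card_Hk a b c x.1 x.2.val hp (Nat.lt_succ_iff.mp x.1.isLt) hac hcb⟩ :
          {H : AddSubgroup (ZMod (p ^ a) × ZMod (p ^ b)) // Nat.card H = p ^ c}))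
      ⟨?_, ?_⟩)).symm
    · rintro ⟨k, u⟩ ⟨k', u'⟩ hxy
      have h1 : Hk p a b c k u.val = Hk p a b c k' u'.val := congrArg Subtype.val hxy
      obtain ⟨hkk, hmod⟩ := Hk_inj a b c _ _ _ _ hp (Nat.lt_succ_iff.mp k.isLt)
        (Nat.lt_succ_iff.mp k'.isLt) hac hcb h1
      have hk2 : k = k' := Fin.ext hkk
      subst hk2
      have hval : u.val = u'.val := by
        have h2 := hmod
        rw [Nat.ModEq, Nat.mod_eq_of_lt (ZMod.val_lt u), Nat.mod_eq_of_lt (ZMod.val_lt u')] at h2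
        exact h2
      exact Sigma.ext rfl (heq_of_eq (ZMod.val_injective _ hval))
    · rintro ⟨H, hH⟩
      obtain ⟨k, hk, u, hu, hHeq⟩ := Hk_surj a b c hp hac hcb H hH
      refine ⟨⟨⟨k, Nat.lt_succ_of_le hk⟩, (u : ZMod (p ^ k))⟩, ?_⟩
      apply Subtype.ext
      show Hk p a b c k ((u : ZMod (p ^ k)) : ZMod (p ^ k)).val = H
      rw [ZMod.val_natCast, Nat.mod_eq_of_lt hu]
      exact hHeq.symm
  rw [key]
  haveI inst4 : ∀ k : Fin (a + 1), Fintype (ZMod (p ^ (k : ℕ))) :=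
    fun k => @ZMod.fintype _ (inst3 k)
  have hcardT : Nat.card ((k : Fin (a + 1)) × ZMod (p ^ (k : ℕ)))
      = ∑ i ∈ Finset.range (a + 1), p ^ i := by
    rw [Nat.card_eq_fintype_card, Fintype.card_sigma, ← Fin.sum_univ_eq_sum_range]
    refine Finset.sum_congr rfl fun k _ => ?_
    exact ZMod.card _
  rw [hcardT]
  -- geometric sum
  have hgeom := geom_sum_mul (p : ℤ) (a + 1)
  have h1 : 1 ≤ p ^ (a + 1) := Nat.one_le_pow _ _ hp.pos
  have h2 : ((∑ i ∈ Finset.range (a + 1), p ^ i) * (p - 1) : ℕ)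
      = ((p ^ (a + 1) - 1 : ℕ)) := by
    have := hgeom
    zify [hp.one_le, h1]
    push_cast
    linarith [this]
  exact h2
end

section
/- Let m, n be positive integers and let (a,b,c,d,ℓ) satisfy a ∣ m, b ∣ a, c ∣ n, d ∣ c, a/b = c/d, 1 ≤ ℓ ≤ a/b, gcd(ℓ, a/b) = 1. Define the subgroup K = {(i·m/a, i·ℓ·n/c + j·n/d) : 0 ≤ i ≤ a−1, 0 ≤ j ≤ d−1} of Z_m × Z_n. Then K is isomorphic to Z_{gcd(b,d)} × Z_{lcm(a,c)} and has order a·d. -/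
/-- The set `K = {(i·m/a, i·ℓ·n/c + j·n/d) : 0 ≤ i < a, 0 ≤ j < d}` is a subgroup of
`Z_m × Z_n`, isomorphic to `Z_{gcd(b,d)} × Z_{lcm(a,c)}`, of order `a·d`. -/
theorem subgroup_repres (m n a b c d ℓ : ℕ) (hm : 0 < m) (hn : 0 < n)
    (ham : a ∣ m) (hba : b ∣ a) (hcn : c ∣ n) (hdc : d ∣ c)
    (he : a / b = c / d) (hℓ1 : 1 ≤ ℓ) (hℓ2 : ℓ ≤ a / b) (hℓ3 : Nat.gcd ℓ (a / b) = 1) :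
    ∃ K : AddSubgroup (ZMod m × ZMod n),
      (K : Set (ZMod m × ZMod n)) =
        {x | ∃ i < a, ∃ j < d,
          x = (((i * (m / a) : ℕ) : ZMod m), ((i * ℓ * (n / c) + j * (n / d) : ℕ) : ZMod n))} ∧
      Nonempty (K ≃+ (ZMod (Nat.gcd b d) × ZMod (Nat.lcm a c))) ∧
      Nat.card K = a * d := by
  have ha : 0 < a := Nat.pos_of_dvd_of_pos ham hm
  have hb : 0 < b := Nat.pos_of_dvd_of_pos hba ha
  have hc : 0 < c := Nat.pos_of_dvd_of_pos hcn hn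
  have hd : 0 < d := Nat.pos_of_dvd_of_pos hdc hc
  haveI : NeZero m := ⟨hm.ne'⟩
  haveI : NeZero n := ⟨hn.ne'⟩
  set e := a / b with he0
  have hepos : 0 < e := Nat.div_pos (Nat.le_of_dvd ha hba) hb
  have hae : a = b * e := (Nat.mul_div_cancel' hba).symm
  have hce : c = d * e := by rw [he]; exact (Nat.mul_div_cancel' hdc).symm
  have hdn : d ∣ n := hdc.trans hcn
  set M₁ := m / a with hM₁'
  have hmM : m = a * M₁ := (Nat.mul_div_cancel' ham).symm
  set N₁ := n / c with hN₁'
  have hnN₁ : n = c * N₁ := (Nat.mul_div_cancel' hcn).symm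
  set N₂ := n / d with hN₂'
  have hnN₂ : n = d * N₂ := (Nat.mul_div_cancel' hdn).symm
  have hN2e : N₂ = e * N₁ := by
    have : d * N₂ = d * (e * N₁) := by rw [← hnN₂, ← mul_assoc, ← hce, ← hnN₁]
    exact Nat.eq_of_mul_eq_mul_left hd this
  set g1 : ZMod m × ZMod n := (((M₁ : ℕ) : ZMod m), ((ℓ * N₁ : ℕ) : ZMod n)) with hg1
  set g2 : ZMod m × ZMod n := ((0 : ZMod m), ((N₂ : ℕ) : ZMod n)) with hg2
  set ψ : ℤ × ℤ →+ ZMod m × ZMod n :=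
    (zmultiplesHom _ g1).coprod (zmultiplesHom _ g2) with hψ
  have hψapp : ∀ x y : ℤ, ψ (x, y) = x • g1 + y • g2 := fun x y => rfl
  -- evaluation lemma
  have hEval : ∀ x y : ℤ, x • g1 + y • g2 =
      (((x * M₁ : ℤ) : ZMod m), ((x * (ℓ * N₁) + y * N₂ : ℤ) : ZMod n)) := by
    intro x y
    refine Prod.ext ?_ ?_ <;> simp [hg1, hg2, zsmul_eq_mul]
  -- casting helpers
  have hmZ : (m : ℤ) = (a : ℤ) * (M₁ : ℤ) := by exact_mod_cast hmM
  have hnZ : (n : ℤ) = (d : ℤ) * (N₂ : ℤ) := by exact_mod_cast hnN₂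
  have haZ : (a : ℤ) = (b : ℤ) * (e : ℤ) := by exact_mod_cast hae
  have hN2Z : (N₂ : ℤ) = (e : ℤ) * (N₁ : ℤ) := by exact_mod_cast hN2e
  -- reduction lemma
  have hred : ∀ x y : ℤ, ∃ i j : ℕ, i < a ∧ j < d ∧
      x • g1 + y • g2 = ((i : ℤ)) • g1 + ((j : ℤ)) • g2 := by
    intro x y
    set X := x / (a : ℤ) with hX
    set y' := y + X * ((ℓ : ℤ) * b) with hy'
    set Y := y' / (d : ℤ) with hY
    refine ⟨(x % a).toNat, (y' % d).toNat, ?_, ?_, ?_⟩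
    · have h1 : x % (a : ℤ) < a := Int.emod_lt_of_pos x (by exact_mod_cast ha)
      omega
    · have h1 : y' % (d : ℤ) < d := Int.emod_lt_of_pos y' (by exact_mod_cast hd)
      omega
    · have hi : ((x % a).toNat : ℤ) = x % a :=
        Int.toNat_of_nonneg (Int.emod_nonneg x (by exact_mod_cast ha.ne'))
      have hj : ((y' % d).toNat : ℤ) = y' % d :=
        Int.toNat_of_nonneg (Int.emod_nonneg y' (by exact_mod_cast hd.ne'))
      have h2 : x - x % (a : ℤ) = (a : ℤ) * X := by
        have := Int.mul_ediv_add_emod x (a : ℤ); linarith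
      have h3 : y' - y' % (d : ℤ) = (d : ℤ) * Y := by
        have := Int.mul_ediv_add_emod y' (d : ℤ); linarith
      rw [hEval, hEval, hi, hj, Prod.mk.injEq]
      constructor
      · rw [ZMod.intCast_eq_intCast_iff]
        refine (Int.modEq_iff_dvd.mpr ⟨X, ?_⟩).symm
        linear_combination (M₁ : ℤ) * h2 - X * hmZ
      · rw [ZMod.intCast_eq_intCast_iff]
        refine (Int.modEq_iff_dvd.mpr ⟨Y, ?_⟩).symm
        linear_combination ((ℓ : ℤ) * N₁) * h2 + (N₂ : ℤ) * h3 - (N₂ : ℤ) * hy'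
          - Y * hnZ + ((ℓ : ℤ) * X * N₁) * haZ - ((ℓ : ℤ) * X * b) * hN2Z
  -- the subgroup
  have hψnat : ∀ i j : ℕ, ψ ((i : ℤ), (j : ℤ)) =
      (((i * M₁ : ℕ) : ZMod m), ((i * ℓ * N₁ + j * N₂ : ℕ) : ZMod n)) := by
    intro i j
    rw [hψapp, hEval, Prod.mk.injEq]
    constructor <;> push_cast <;> ring_nf
  have hKset : (ψ.range : Set (ZMod m × ZMod n)) =
      {x | ∃ i < a, ∃ j < d,
        x = (((i * M₁ : ℕ) : ZMod m), ((i * ℓ * N₁ + j * N₂ : ℕ) : ZMod n))} := by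
    ext z
    simp only [SetLike.mem_coe, AddMonoidHom.mem_range, Set.mem_setOf_eq, Prod.exists]
    constructor
    · rintro ⟨x, y, rfl⟩
      obtain ⟨i, j, hi, hj, hij⟩ := hred x y
      exact ⟨i, hi, j, hj, by rw [hψapp, hij, ← hψapp, hψnat]⟩
    · rintro ⟨i, hi, j, hj, rfl⟩
      exact ⟨(i : ℤ), (j : ℤ), hψnat i j⟩
  have hM₁pos : 0 < M₁ := by
    rcases Nat.eq_zero_or_pos M₁ with h | h
    · rw [h, mul_zero] at hmM; omega
    · exact h
  have hN₂pos : 0 < N₂ := by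
    rcases Nat.eq_zero_or_pos N₂ with h | h
    · rw [h, mul_zero] at hnN₂; omega
    · exact h
  have hcard : Nat.card ψ.range = a * d := by
    have himg : (ψ.range : Set (ZMod m × ZMod n)) =
        (fun p : ℕ × ℕ => (((p.1 * M₁ : ℕ) : ZMod m), ((p.1 * ℓ * N₁ + p.2 * N₂ : ℕ) : ZMod n)))
          '' ↑(Finset.range a ×ˢ Finset.range d) := by
      rw [hKset]
      ext z
      simp only [Set.mem_setOf_eq, Set.mem_image, Finset.coe_product, Set.mem_prod,
        Finset.mem_coe, Finset.mem_range]
      constructor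
      · rintro ⟨i, hi, j, hj, rfl⟩; exact ⟨(i, j), ⟨hi, hj⟩, rfl⟩
      · rintro ⟨⟨i, j⟩, ⟨hi, hj⟩, rfl⟩; exact ⟨i, hi, j, hj, rfl⟩
    have hinj : Set.InjOn
        (fun p : ℕ × ℕ => (((p.1 * M₁ : ℕ) : ZMod m), ((p.1 * ℓ * N₁ + p.2 * N₂ : ℕ) : ZMod n)))
        ↑(Finset.range a ×ˢ Finset.range d) := by
      rintro ⟨i, j⟩ hij ⟨i', j'⟩ hij' heq
      simp only [Finset.coe_product, Set.mem_prod, Finset.mem_coe, Finset.mem_range] at hij hij'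
      obtain ⟨hi, hj⟩ := hij
      obtain ⟨hi', hj'⟩ := hij'
      simp only [Prod.mk.injEq] at heq
      obtain ⟨h1, h2⟩ := heq
      have hii : i = i' := by
        have u1 : i * M₁ < m := by rw [hmM]; exact (Nat.mul_lt_mul_right hM₁pos).mpr hi
        have u2 : i' * M₁ < m := by rw [hmM]; exact (Nat.mul_lt_mul_right hM₁pos).mpr hi'
        have := congrArg ZMod.val h1
        rw [ZMod.val_natCast_of_lt u1, ZMod.val_natCast_of_lt u2] at this
        exact Nat.eq_of_mul_eq_mul_right hM₁pos this
      subst hii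
      have h3 : ((j * N₂ : ℕ) : ZMod n) = ((j' * N₂ : ℕ) : ZMod n) := by
        rw [Nat.cast_add, Nat.cast_add] at h2
        exact add_left_cancel h2
      have u1 : j * N₂ < n := by rw [hnN₂]; exact (Nat.mul_lt_mul_right hN₂pos).mpr hj
      have u2 : j' * N₂ < n := by rw [hnN₂]; exact (Nat.mul_lt_mul_right hN₂pos).mpr hj'
      have := congrArg ZMod.val h3
      rw [ZMod.val_natCast_of_lt u1, ZMod.val_natCast_of_lt u2] at this
      exact Prod.ext rfl (Nat.eq_of_mul_eq_mul_right hN₂pos this)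
    rw [← SetLike.coe_sort_coe, himg, Nat.card_coe_set_eq,
      Set.ncard_image_of_injOn hinj, Set.ncard_coe_finset, Finset.card_product,
      Finset.card_range, Finset.card_range]
  -- Part C: the isomorphism
  set g := Nat.gcd b d with hgdef
  have hgpos : 0 < g := Nat.gcd_pos_of_pos_left d hb
  set L := Nat.lcm a c with hLdef
  have hLpos : 0 < L := Nat.pos_of_ne_zero (Nat.lcm_ne_zero ha.ne' hc.ne')
  haveI : NeZero g := ⟨hgpos.ne'⟩
  haveI : NeZero L := ⟨hLpos.ne'⟩
  haveI : NeZero (e * b) := ⟨by positivity⟩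
  have hℓe : Nat.Coprime ℓ e := hℓ3
  obtain ⟨w, hw⟩ := ZMod.unitsMap_surjective (show e ∣ e * b from dvd_mul_right e b)
      (ZMod.unitOfCoprime ℓ hℓe)⁻¹
  set q := (w : ZMod (e * b)).val with hqdef
  have hqcop : Nat.Coprime q (e * b) := ZMod.val_coe_unit_coprime w
  have hqb : Nat.Coprime q b := Nat.Coprime.coprime_dvd_right (dvd_mul_left b e) hqcop
  have hqe : ((q : ℕ) : ZMod e) * (ℓ : ZMod e) = 1 := by
    have h1 : ((q : ℕ) : ZMod e) = ((ZMod.unitsMap (dvd_mul_right e b) w : ZMod e)) := by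
      rw [ZMod.unitsMap_def]
      simp [hqdef, ZMod.natCast_val, ZMod.castHom_apply]
    rw [h1, hw]
    have h2 : ((ZMod.unitOfCoprime ℓ hℓe : ZMod e)) = (ℓ : ZMod e) :=
      ZMod.coe_unitOfCoprime ℓ hℓe
    rw [← h2, ← Units.val_mul, inv_mul_cancel, Units.val_one]
  obtain ⟨p0, hp0⟩ : (e : ℤ) ∣ (q : ℤ) * (ℓ : ℤ) - 1 := by
    rw [← ZMod.intCast_zmod_eq_zero_iff_dvd]
    push_cast
    rw [hqe]
    ring
  set p : ℤ := -p0 with hpdef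
  have hpq : p * e + (q : ℤ) * ℓ = 1 := by rw [hpdef]; linarith [hp0]
  have hgbd : Nat.gcd b (q * d) = g := by
    rw [hgdef, Nat.Coprime.gcd_mul_left_cancel_right d hqb]
  set α := Int.gcdA (b : ℤ) ((q : ℤ) * d) with hα
  set β := -Int.gcdB (b : ℤ) ((q : ℤ) * d) with hβ
  have hbez : (g : ℤ) = α * b - β * ((q : ℤ) * d) := by
    have h1 := Int.gcd_eq_gcd_ab (b : ℤ) ((q : ℤ) * d)
    have h2 : Int.gcd (b : ℤ) ((q : ℤ) * d) = g := by
      have : ((q : ℤ) * d) = ((q * d : ℕ) : ℤ) := by push_cast; ring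
      rw [this, Int.gcd_natCast_natCast, hgbd]
    rw [h2] at h1
    rw [hα, hβ]
    linarith [h1]
  obtain ⟨δ, hδ⟩ : ∃ δ, d = g * δ := (Nat.gcd_dvd_right b d)
  obtain ⟨b', hb'⟩ : ∃ b', b = g * b' := (Nat.gcd_dvd_left b d)
  have hdZ : (d : ℤ) = (g : ℤ) * δ := by exact_mod_cast hδ
  have hbZ : (b : ℤ) = (g : ℤ) * b' := by exact_mod_cast hb'
  have hgac : Nat.gcd a c = g * e := by rw [hae, hce, Nat.gcd_mul_right]
  have hglcm : (g * e) * L = a * c := by rw [← hgac, hLdef]; exact Nat.gcd_mul_lcm a c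
  have hLval : L = b * δ * e := by
    have h1 : (g * e) * L = (g * e) * (b * δ * e) := by
      rw [hglcm]; rw [hae, hce, hδ]; ring
    exact Nat.eq_of_mul_eq_mul_left (by positivity) h1
  have hgL : g * L = a * d := by rw [hLval, hae, hδ]; ring
  have hLZ : (L : ℤ) = (b : ℤ) * δ * e := by exact_mod_cast hLval
  set k : ℤ := β * δ * e with hk
  set u : ZMod m × ZMod n := ((e : ℤ) + k * q) • g1 + (k * p - (ℓ : ℤ)) • g2 with hu
  set v : ZMod m × ZMod n := (q : ℤ) • g1 + p • g2 with hv
  have hsmul2 : ∀ (t x y : ℤ), t • (x • g1 + y • g2) = (t * x) • g1 + (t * y) • g2 := by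
    intro t x y; rw [smul_add, smul_smul, smul_smul]
  have hgu : (g : ℤ) • u = 0 := by
    rw [hu, hsmul2, hEval, Prod.ext_iff]
    refine ⟨?_, ?_⟩ <;> simp only [Prod.fst_zero, Prod.snd_zero] <;>
      rw [ZMod.intCast_zmod_eq_zero_iff_dvd]
    · refine ⟨α, ?_⟩
      linear_combination ((e : ℤ) * M₁) * hbez - (β * e * (q : ℤ) * M₁) * hdZ - α * hmZ
        - (α * (M₁ : ℤ)) * haZ
    · refine ⟨β, ?_⟩
      linear_combination (-β) * hnZ + ((g : ℤ) * q * ℓ * N₁ + (g : ℤ) * p * N₂) * hk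
        + (-β * (N₂ : ℤ)) * hdZ + ((g : ℤ) * β * δ * e * p - (g : ℤ) * ℓ - (g : ℤ) * β * δ) * hN2Z
        + ((g : ℤ) * β * δ * e * N₁) * hpq
  have hLv : (L : ℤ) • v = 0 := by
    rw [hv, hsmul2, hEval, Prod.ext_iff]
    refine ⟨?_, ?_⟩ <;> simp only [Prod.fst_zero, Prod.snd_zero] <;>
      rw [ZMod.intCast_zmod_eq_zero_iff_dvd]
    · refine ⟨(δ : ℤ) * q, ?_⟩
      linear_combination ((q : ℤ) * M₁) * hLZ - ((δ : ℤ) * q) * hmZ - ((δ : ℤ) * q * M₁) * haZ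
    · refine ⟨(b' : ℤ), ?_⟩
      linear_combination ((L : ℤ) * p - (b' : ℤ) * g * δ) * hN2Z + ((L : ℤ) * N₁) * hpq
        + (N₁ : ℤ) * hLZ - (b' : ℤ) * hnZ - ((b' : ℤ) * N₂) * hdZ + ((δ : ℤ) * e * N₁) * hbZ
  set fu : ZMod g →+ ZMod m × ZMod n := ZMod.lift g ⟨zmultiplesHom _ u, hgu⟩ with hfu
  set fv : ZMod L →+ ZMod m × ZMod n := ZMod.lift L ⟨zmultiplesHom _ v, hLv⟩ with hfv
  set f := fu.coprod fv with hf
  have hfint : ∀ x y : ℤ, f ((x : ZMod g), (y : ZMod L)) = x • u + y • v := by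
    intro x y
    rw [hf, AddMonoidHom.coprod_apply, hfu, hfv, ZMod.lift_coe, ZMod.lift_coe]
    rfl
  have huv1 : p • u + ((ℓ : ℤ) - p * k) • v = g1 := by
    rw [hu, hv]
    have h1 : p • ((((e : ℤ) + k * q) • g1 + (k * p - (ℓ : ℤ)) • g2))
        + ((ℓ : ℤ) - p * k) • ((q : ℤ) • g1 + p • g2)
        = (p * e + (q : ℤ) * ℓ) • g1 + (0 : ℤ) • g2 := by
      module
    rw [h1, hpq, one_smul, zero_smul, add_zero]
  have huv2 : (-(q : ℤ)) • u + ((q : ℤ) * k + e) • v = g2 := by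
    rw [hu, hv]
    have h1 : (-(q : ℤ)) • ((((e : ℤ) + k * q) • g1 + (k * p - (ℓ : ℤ)) • g2))
        + ((q : ℤ) * k + e) • ((q : ℤ) • g1 + p • g2)
        = (0 : ℤ) • g1 + (p * e + (q : ℤ) * ℓ) • g2 := by
      module
    rw [h1, hpq, one_smul, zero_smul, zero_add]
  have hrange : f.range = ψ.range := by
    apply le_antisymm
    · rintro z ⟨⟨x, y⟩, rfl⟩
      obtain ⟨x', rfl⟩ := ZMod.intCast_surjective x
      obtain ⟨y', rfl⟩ := ZMod.intCast_surjective y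
      rw [hfint]
      have hums : u ∈ ψ.range := ⟨((e : ℤ) + k * q, k * p - (ℓ : ℤ)), by rw [hψapp, ← hu]⟩
      have hvms : v ∈ ψ.range := ⟨((q : ℤ), p), by rw [hψapp, ← hv]⟩
      exact AddSubgroup.add_mem _ (AddSubgroup.zsmul_mem _ hums _)
        (AddSubgroup.zsmul_mem _ hvms _)
    · rintro z ⟨⟨x, y⟩, rfl⟩
      rw [hψapp]
      have e1 := hfint p ((ℓ : ℤ) - p * k)
      rw [huv1] at e1
      have h1 : g1 ∈ f.range := ⟨_, e1⟩
      have e2 := hfint (-(q : ℤ)) ((q : ℤ) * k + e)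
      rw [huv2] at e2
      have h2 : g2 ∈ f.range := ⟨_, e2⟩
      exact AddSubgroup.add_mem _ (AddSubgroup.zsmul_mem _ h1 _)
        (AddSubgroup.zsmul_mem _ h2 _)
  have hcards : Nat.card (ZMod g × ZMod L) = Nat.card f.range := by
    rw [hrange, hcard, Nat.card_prod, Nat.card_zmod, Nat.card_zmod, hgL]
  have hbij : Function.Bijective f.rangeRestrict := by
    rw [Nat.bijective_iff_surjective_and_card]
    exact ⟨f.rangeRestrict_surjective, hcards⟩
  refine ⟨ψ.range, hKset, ?_, hcard⟩
  exact ⟨((AddEquiv.ofBijective f.rangeRestrict hbij).trans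
      (AddEquiv.addSubgroupCongr hrange)).symm⟩
end

section
/- Let m, n be positive integers and let (a,b,c,d,ℓ) satisfy a ∣ m, b ∣ a, c ∣ n, d ∣ c, a/b = c/d, 1 ≤ ℓ ≤ a/b, gcd(ℓ, a/b) = 1, and let K = {(i·m/a, i·ℓ·n/c + j·n/d) : 0 ≤ i ≤ a−1, 0 ≤ j ≤ d−1} ≤ Z_m × Z_n. Then the quotient group (Z_m × Z_n)/K is isomorphic to Z_{gcd(m/a, n/c)} × Z_{lcm(m/b, n/d)}. -/
/-!
With `m = b·e·(A·g)` and `n = d·e·(C·g)`, where `e = a/b = c/d`, `g = gcd(m/a, n/c)` and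
`A`, `C` are coprime, `(Z_m × Z_n)/K` is `ℤ²` modulo the lattice spanned by `(m, 0)`,
`(0, n)`, `(A·g, ℓ·C·g)` and `(0, e·C·g)`. Pick `t ≡ ℓ (mod e)` coprime to `A` and
`α A + β C t = 1`.
The unimodular matrix with rows `(α, β)` and `(-C t, A)` maps this lattice into
`gℤ × (e·A·C·g)ℤ`, so `ℤ² → Z_g × Z_{e·A·C·g}` factors through the quotient.
Since `|K| ≥ b·e·d`, the quotient has at most `g · e·A·C·g` elements, and the
induced surjection is an isomorphism.
-/

theorem Nat.exists_modEq_coprime {ℓ e : ℕ} (x : ℕ) [NeZero e] [NeZero x]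
    (h : ℓ.Coprime e) : ∃ t, t ≡ ℓ [MOD e] ∧ t.Coprime x := by
  have hdvd : e ∣ e * x := dvd_mul_right e x
  obtain ⟨u, hu⟩ := ZMod.unitsMap_surjective hdvd (ZMod.unitOfCoprime ℓ h)
  refine ⟨(u : ZMod (e * x)).val, ?_,
    Nat.Coprime.coprime_mul_left_right (ZMod.val_coe_unit_coprime u)⟩
  rw [← ZMod.natCast_eq_natCast_iff, ZMod.natCast_val, ← ZMod.unitsMap_val hdvd, hu]
  rfl

theorem nonempty_addEquiv_of_ker_le {G Q H : Type*} [AddGroup G] [AddGroup Q] [AddGroup H]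
    [Finite Q] {ρ : G →+ Q} {ψ : G →+ H} (hρ : Function.Surjective ρ)
    (hψ : Function.Surjective ψ) (hle : ρ.ker ≤ ψ.ker) (hcard : Nat.card Q ≤ Nat.card H) :
    Nonempty (Q ≃+ H) := by
  have hρ_index : ρ.ker.index = Nat.card Q := by
    rw [AddSubgroup.index_eq_card,
      Nat.card_congr (QuotientAddGroup.quotientKerEquivOfSurjective ρ hρ).toEquiv]
  have hψ_index : ψ.ker.index = Nat.card H := by
    rw [AddSubgroup.index_eq_card,
      Nat.card_congr (QuotientAddGroup.quotientKerEquivOfSurjective ψ hψ).toEquiv]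
  have hker : ρ.ker = ψ.ker := hle.eq_of_not_lt fun hlt =>
    (AddSubgroup.index_strictAnti hlt).not_ge (hρ_index ▸ hψ_index ▸ hcard)
  exact ⟨(QuotientAddGroup.quotientKerEquivOfSurjective ρ hρ).symm.trans
    ((QuotientAddGroup.quotientAddEquivOfEq hker).trans
      (QuotientAddGroup.quotientKerEquivOfSurjective ψ hψ))⟩

def matrixMod (α β γ δ : ℤ) (p q : ℕ) : ℤ × ℤ →+ ZMod p × ZMod q :=
  ((Int.castAddHom (ZMod p)).comp (α • .fst ℤ ℤ + β • .snd ℤ ℤ)).prod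
    ((Int.castAddHom (ZMod q)).comp (γ • .fst ℤ ℤ + δ • .snd ℤ ℤ))

theorem matrixMod_apply (α β γ δ : ℤ) (p q : ℕ) (x y : ℤ) :
    matrixMod α β γ δ p q (x, y) =
      (((α * x + β * y : ℤ) : ZMod p), ((γ * x + δ * y : ℤ) : ZMod q)) := by
  simp [matrixMod]

theorem matrixMod_eq_zero_iff {α β γ δ : ℤ} {p q : ℕ} {x y : ℤ} :
    matrixMod α β γ δ p q (x, y) = 0 ↔
      (p : ℤ) ∣ α * x + β * y ∧ (q : ℤ) ∣ γ * x + δ * y := by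
  simp only [matrixMod_apply, Prod.mk_eq_zero, ZMod.intCast_zmod_eq_zero_iff_dvd]

theorem matrixMod_surjective {α β γ δ : ℤ} (p q : ℕ) (hdet : α * δ - β * γ = 1) :
    Function.Surjective (matrixMod α β γ δ p q) := by
  rintro ⟨u, v⟩
  obtain ⟨z, rfl⟩ := ZMod.intCast_surjective u
  obtain ⟨w, rfl⟩ := ZMod.intCast_surjective v
  refine ⟨(δ * z - β * w, α * w - γ * z), ?_⟩
  rw [matrixMod_apply]
  congr 2
  · linear_combination z * hdet
  · linear_combination w * hdet

theorem eq_of_natCast_mul_eq {n a q i i' : ℕ} (hn : n = a * q) (hq : 0 < q) (hi : i < a)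
    (hi' : i' < a) (h : ((i * q : ℕ) : ZMod n) = ((i' * q : ℕ) : ZMod n)) : i = i' := by
  rw [ZMod.natCast_eq_natCast_iff', hn, Nat.mod_eq_of_lt (Nat.mul_lt_mul_of_pos_right hi hq),
    Nat.mod_eq_of_lt (Nat.mul_lt_mul_of_pos_right hi' hq)] at h
  exact Nat.eq_of_mul_eq_mul_right hq h

def intToQuotient {m n : ℕ} (K : AddSubgroup (ZMod m × ZMod n)) :
    ℤ × ℤ →+ (ZMod m × ZMod n) ⧸ K :=
  (QuotientAddGroup.mk' K).comp ((Int.castAddHom (ZMod m)).prodMap (Int.castAddHom (ZMod n)))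

theorem intToQuotient_surjective {m n : ℕ} (K : AddSubgroup (ZMod m × ZMod n)) :
    Function.Surjective (intToQuotient K) :=
  (QuotientAddGroup.mk'_surjective K).comp
    (ZMod.intCast_surjective.prodMap ZMod.intCast_surjective)

section Normalized

def normalizedSubgroupSet (g A C e b d ℓ : ℕ) :
    Set (ZMod (b * e * (A * g)) × ZMod (d * e * (C * g))) :=
  {x | ∃ i < b * e, ∃ j < d,
    x = (((i * (A * g) : ℕ) : ZMod (b * e * (A * g))),
      ((i * ℓ * (C * g) + j * (e * (C * g)) : ℕ) : ZMod (d * e * (C * g))))}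

variable {g A C e b d ℓ : ℕ}
  {K : AddSubgroup (ZMod (b * e * (A * g)) × ZMod (d * e * (C * g)))}

theorem mul_le_card_of_coe_eq (hg : 0 < g) (hA : 0 < A) (hC : 0 < C) (he : 0 < e)
    (hb : 0 < b) (hd : 0 < d)
    (hK : (K : Set _) = normalizedSubgroupSet g A C e b d ℓ) :
    b * e * d ≤ Nat.card K := by
  have : NeZero (b * e * (A * g)) := ⟨by positivity⟩
  have : NeZero (d * e * (C * g)) := ⟨by positivity⟩
  let F : Fin (b * e) × Fin d → K := fun ij =>
    ⟨(((ij.1 * (A * g) : ℕ) : ZMod (b * e * (A * g))),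
      ((ij.1 * ℓ * (C * g) + ij.2 * (e * (C * g)) : ℕ) : ZMod (d * e * (C * g)))), by
      rw [← SetLike.mem_coe, hK]; exact ⟨ij.1, ij.1.isLt, ij.2, ij.2.isLt, rfl⟩⟩
  have hF : Function.Injective F := by
    rintro ⟨i, j⟩ ⟨i', j'⟩ h
    simp only [F, Subtype.mk.injEq, Prod.mk.injEq] at h
    obtain rfl : i = i' := Fin.ext (eq_of_natCast_mul_eq rfl (by positivity) i.isLt i'.isLt h.1)
    have hj := add_left_cancel (by push_cast at h; exact h.2)
    obtain rfl : j = j' := Fin.ext (eq_of_natCast_mul_eq (mul_assoc d e (C * g)) (by positivity)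
      j.isLt j'.isLt (by exact_mod_cast hj))
    rfl
  simpa using Nat.card_le_card_of_injective F hF

theorem ker_intToQuotient_le_ker_matrixMod {t : ℕ} (ht : t ≡ ℓ [MOD e]) (α β : ℤ)
    (hK : (K : Set _) = normalizedSubgroupSet g A C e b d ℓ) :
    (intToQuotient K).ker ≤ (matrixMod α β (-(C * t)) A g (e * (A * C * g))).ker := by
  rintro ⟨x, y⟩ hxy
  have hmem := (QuotientAddGroup.eq_zero_iff _).mp hxy
  rw [← SetLike.mem_coe, hK] at hmem
  obtain ⟨i, -, j, -, hij⟩ := hmem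
  obtain ⟨s, hs⟩ := (ZMod.intCast_eq_intCast_iff_dvd_sub x (i * (A * g) : ℕ) _).mp
    (by simpa using congrArg Prod.fst hij)
  obtain ⟨u, hu⟩ := (ZMod.intCast_eq_intCast_iff_dvd_sub y
    (i * ℓ * (C * g) + j * (e * (C * g)) : ℕ) _).mp (by simpa using congrArg Prod.snd hij)
  obtain ⟨r, hr⟩ := Nat.modEq_iff_dvd.mp ht
  push_cast at hs hu hr
  rw [AddMonoidHom.mem_ker, matrixMod_eq_zero_iff]
  push_cast
  exact ⟨⟨α * (i * A - b * e * A * s) + β * (i * ℓ * C + j * e * C - d * e * C * u),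
      by linear_combination -α * hs - β * hu⟩,
    ⟨i * r + b * t * s + j - d * u,
      by linear_combination (C * t : ℤ) * hs - A * hu + (i * A * C * g : ℤ) * hr⟩⟩

theorem quotient_equiv_of_coprime (hg : 0 < g) (hA : 0 < A) (hC : 0 < C) (he : 0 < e)
    (hb : 0 < b) (hd : 0 < d) (hAC : A.Coprime C) (hℓ : ℓ.Coprime e)
    (hK : (K : Set _) = normalizedSubgroupSet g A C e b d ℓ) :
    Nonempty ((ZMod (b * e * (A * g)) × ZMod (d * e * (C * g))) ⧸ K ≃+
      ZMod g × ZMod (e * (A * C * g))) := by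
  have : NeZero e := ⟨he.ne'⟩
  have : NeZero A := ⟨hA.ne'⟩
  have : NeZero (b * e * (A * g)) := ⟨by positivity⟩
  have : NeZero (d * e * (C * g)) := ⟨by positivity⟩
  obtain ⟨t, ht, htA⟩ := Nat.exists_modEq_coprime A hℓ
  obtain ⟨α, β, hαβ⟩ := (Nat.Coprime.mul_right hAC htA.symm).isCoprime
  push_cast at hαβ
  have hψ : Function.Surjective (matrixMod α β (-(C * t)) A g (e * (A * C * g))) :=
    matrixMod_surjective _ _ (by linear_combination hαβ)
  have hcard : Nat.card ((ZMod (b * e * (A * g)) × ZMod (d * e * (C * g))) ⧸ K) ≤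
      Nat.card (ZMod g × ZMod (e * (A * C * g))) := by
    have hG := AddSubgroup.card_eq_card_quotient_mul_card_addSubgroup K
    simp only [Nat.card_prod, Nat.card_zmod] at hG ⊢
    refine Nat.le_of_mul_le_mul_right (c := b * e * d) ?_ (by positivity)
    calc _ ≤ _ := Nat.mul_le_mul_left _ (mul_le_card_of_coe_eq hg hA hC he hb hd hK)
      _ = _ := hG.symm
      _ = _ := by ring
  exact nonempty_addEquiv_of_ker_le (intToQuotient_surjective K) hψ
    (ker_intToQuotient_le_ker_matrixMod ht α β hK) hcard

end Normalized

theorem quotient_repres_general (m n a b c d ℓ : ℕ) (hm : 0 < m) (hn : 0 < n)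
    (ham : a ∣ m) (hba : b ∣ a) (hcn : c ∣ n) (hdc : d ∣ c)
    (he : a / b = c / d) (hℓ3 : Nat.gcd ℓ (a / b) = 1)
    (K : AddSubgroup (ZMod m × ZMod n))
    (hK : (K : Set (ZMod m × ZMod n)) =
      {x | ∃ i < a, ∃ j < d,
        x = (((i * (m / a) : ℕ) : ZMod m), ((i * ℓ * (n / c) + j * (n / d) : ℕ) : ZMod n))}) :
    Nonempty (((ZMod m × ZMod n) ⧸ K) ≃+
      (ZMod (Nat.gcd (m / a) (n / c)) × ZMod (Nat.lcm (m / b) (n / d)))) := by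
  obtain ⟨A₀, rfl⟩ := ham
  obtain ⟨e, rfl⟩ := hba
  obtain ⟨C₀, rfl⟩ := hcn
  obtain ⟨e', rfl⟩ := hdc
  simp only [CanonicallyOrderedAdd.mul_pos] at hm hn
  obtain ⟨⟨hb, he0⟩, hA₀⟩ := hm
  obtain ⟨⟨hd, -⟩, hC₀⟩ := hn
  obtain rfl : e = e' := by simpa [hb.ne', hd.ne'] using he
  obtain ⟨g, A, C, hg, hAC, rfl, rfl⟩ :=
    Nat.exists_coprime' (Nat.gcd_pos_of_pos_left C₀ hA₀)
  have hdiv_a : b * e * (A * g) / (b * e) = A * g := Nat.mul_div_cancel_left _ (by positivity)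
  have hdiv_c : d * e * (C * g) / (d * e) = C * g := Nat.mul_div_cancel_left _ (by positivity)
  have hdiv_b : b * e * (A * g) / b = e * (A * g) := by
    rw [mul_assoc, Nat.mul_div_cancel_left _ hb]
  have hdiv_d : d * e * (C * g) / d = e * (C * g) := by
    rw [mul_assoc, Nat.mul_div_cancel_left _ hd]
  have hgcd : (A * g).gcd (C * g) = g := by rw [Nat.gcd_mul_right, hAC.gcd_eq_one, one_mul]
  have hlcm : (e * (A * g)).lcm (e * (C * g)) = e * (A * C * g) := by
    rw [Nat.lcm_mul_left, Nat.lcm_mul_right, hAC.lcm_eq_mul]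
  rw [hdiv_a, hdiv_c, hdiv_b, hdiv_d, hgcd, hlcm]
  rw [hdiv_a, hdiv_c, hdiv_d] at hK
  rw [Nat.mul_div_cancel_left _ hb] at hℓ3
  exact quotient_equiv_of_coprime hg (Nat.pos_of_mul_pos_right hA₀)
    (Nat.pos_of_mul_pos_right hC₀) he0 hb hd hAC hℓ3 hK

/-- The quotient `(Z_m × Z_n)/K` of `Z_m × Z_n` by the subgroup
`K = {(i·m/a, i·ℓ·n/c + j·n/d) : 0 ≤ i < a, 0 ≤ j < d}` is isomorphic to
`Z_{gcd(m/a, n/c)} × Z_{lcm(m/b, n/d)}`. -/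
theorem quotient_repres (m n a b c d ℓ : ℕ) (hm : 0 < m) (hn : 0 < n)
    (ham : a ∣ m) (hba : b ∣ a) (hcn : c ∣ n) (hdc : d ∣ c)
    (he : a / b = c / d) (hℓ1 : 1 ≤ ℓ) (hℓ2 : ℓ ≤ a / b) (hℓ3 : Nat.gcd ℓ (a / b) = 1)
    (K : AddSubgroup (ZMod m × ZMod n))
    (hK : (K : Set (ZMod m × ZMod n)) =
      {x | ∃ i < a, ∃ j < d,
        x = (((i * (m / a) : ℕ) : ZMod m), ((i * ℓ * (n / c) + j * (n / d) : ℕ) : ZMod n))}) :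
    Nonempty (((ZMod m × ZMod n) ⧸ K) ≃+
      (ZMod (Nat.gcd (m / a) (n / c)) × ZMod (Nat.lcm (m / b) (n / d)))) :=
  quotient_repres_general m n a b c d ℓ hm hn ham hba hcn hdc he hℓ3 K hK
end

section
/- In the quotient group (Z_m × Z_n)/K with K as above, the order of the coset (0,1) + K equals n/d. -/
/-- In `(Z_m × Z_n)/K`, the order of the coset `(0,1) + K` equals `n/d`. -/
theorem order_coset_zero_one (m n a b c d ℓ : ℕ) (hm : 0 < m) (hn : 0 < n)
    (ham : a ∣ m) (hba : b ∣ a) (hcn : c ∣ n) (hdc : d ∣ c)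
    (he : a / b = c / d) (hℓ1 : 1 ≤ ℓ) (hℓ2 : ℓ ≤ a / b) (hℓ3 : Nat.gcd ℓ (a / b) = 1)
    (K : AddSubgroup (ZMod m × ZMod n))
    (hK : (K : Set (ZMod m × ZMod n)) =
      {x | ∃ i < a, ∃ j < d,
        x = (((i * (m / a) : ℕ) : ZMod m), ((i * ℓ * (n / c) + j * (n / d) : ℕ) : ZMod n))}) :
    addOrderOf (QuotientAddGroup.mk ((0, 1) : ZMod m × ZMod n) :
      (ZMod m × ZMod n) ⧸ K) = n / d := by
  haveI : NeZero m := ⟨hm.ne'⟩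
  haveI : NeZero n := ⟨hn.ne'⟩
  have ha : 0 < a := Nat.pos_of_dvd_of_pos ham hm
  have hdn : d ∣ n := hdc.trans hcn
  have hd0 : 0 < d := Nat.pos_of_dvd_of_pos hdn hn
  have hnd : 0 < n / d := Nat.div_pos (Nat.le_of_dvd hn hdn) hd0
  have hma : 0 < m / a := Nat.div_pos (Nat.le_of_dvd hm ham) ha
  have hmem : ∀ k : ℕ, ((0, (k : ZMod n)) : ZMod m × ZMod n) ∈ K ↔ (n / d) ∣ k := by
    intro k
    rw [← SetLike.mem_coe, hK]
    constructor
    · rintro ⟨i, hi, j, hj, hx⟩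
      rw [Prod.ext_iff] at hx
      obtain ⟨hx1, hx2⟩ := hx
      have hmi : m ∣ i * (m / a) := (ZMod.natCast_eq_zero_iff _ _).1 hx1.symm
      have hma' : a * (m / a) = m := Nat.mul_div_cancel' ham
      have hai : a ∣ i := by
        obtain ⟨q, hq⟩ := hmi
        refine ⟨q, Nat.eq_of_mul_eq_mul_right hma ?_⟩
        calc i * (m / a) = m * q := hq
          _ = a * (m / a) * q := by rw [hma']
          _ = a * q * (m / a) := by ring
      have hi0 : i = 0 := Nat.eq_zero_of_dvd_of_lt hai hi
      subst hi0
      simp only [Nat.zero_mul, Nat.zero_add] at hx2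
      have hmod : k ≡ j * (n / d) [MOD n] := (ZMod.natCast_eq_natCast_iff _ _ _).1 hx2
      have hmod' : k ≡ j * (n / d) [MOD n / d] :=
        hmod.of_dvd (Nat.div_dvd_of_dvd hdn)
      have h0 : j * (n / d) ≡ 0 [MOD n / d] :=
        (Nat.modEq_zero_iff_dvd).2 (dvd_mul_left _ _)
      exact (Nat.modEq_zero_iff_dvd).1 (hmod'.trans h0)
    · rintro ⟨t, rfl⟩
      refine ⟨0, ha, t % d, Nat.mod_lt t hd0, ?_⟩
      rw [Prod.ext_iff]
      constructor
      · simp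
      · simp only [Nat.zero_mul, Nat.zero_add]
        rw [ZMod.natCast_eq_natCast_iff]
        have : (n / d) * t ≡ (n / d) * (t % d) [MOD (n / d) * d] :=
          Nat.ModEq.mul_left' _ (Nat.mod_modEq t d).symm
        rw [Nat.div_mul_cancel hdn] at this
        calc n / d * t ≡ n / d * (t % d) [MOD n] := this
          _ = t % d * (n / d) := Nat.mul_comm _ _
  have key : ∀ k : ℕ,
      k • (QuotientAddGroup.mk ((0, 1) : ZMod m × ZMod n) : (ZMod m × ZMod n) ⧸ K) = 0 ↔
        (n / d) ∣ k := by
    intro k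
    have h1 : k • (QuotientAddGroup.mk ((0, 1) : ZMod m × ZMod n) : (ZMod m × ZMod n) ⧸ K) =
        QuotientAddGroup.mk (k • ((0, 1) : ZMod m × ZMod n)) :=
      (map_nsmul (QuotientAddGroup.mk' K) _ _).symm
    have h2 : k • ((0, 1) : ZMod m × ZMod n) = ((0 : ZMod m), (k : ZMod n)) := by
      ext <;> simp [nsmul_eq_mul]
    rw [h1, h2, QuotientAddGroup.eq_zero_iff]
    exact hmem k
  refine Nat.dvd_antisymm ?_ ?_
  · exact addOrderOf_dvd_of_nsmul_eq_zero ((key _).2 dvd_rfl)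
  · exact (key _).1 (addOrderOf_nsmul_eq_zero _)
end

section
/- In the quotient group (Z_m × Z_n)/K with K as above, the order of the coset (1,0) + K equals m/b. -/
/-- In `(Z_m × Z_n)/K`, the order of the coset `(1,0) + K` equals `m/b`. -/
theorem order_coset_one_zero (m n a b c d ℓ : ℕ) (hm : 0 < m) (hn : 0 < n)
    (ham : a ∣ m) (hba : b ∣ a) (hcn : c ∣ n) (hdc : d ∣ c)
    (he : a / b = c / d) (hℓ1 : 1 ≤ ℓ) (hℓ2 : ℓ ≤ a / b) (hℓ3 : Nat.gcd ℓ (a / b) = 1)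
    (K : AddSubgroup (ZMod m × ZMod n))
    (hK : (K : Set (ZMod m × ZMod n)) =
      {x | ∃ i < a, ∃ j < d,
        x = (((i * (m / a) : ℕ) : ZMod m), ((i * ℓ * (n / c) + j * (n / d) : ℕ) : ZMod n))}) :
    addOrderOf (QuotientAddGroup.mk ((1, 0) : ZMod m × ZMod n) :
      (ZMod m × ZMod n) ⧸ K) = m / b := by
  have ha : 0 < a := Nat.pos_of_dvd_of_pos ham hm
  have hb : 0 < b := Nat.pos_of_dvd_of_pos hba ha
  have hc : 0 < c := Nat.pos_of_dvd_of_pos hcn hn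
  have hd : 0 < d := Nat.pos_of_dvd_of_pos hdc hc
  have hbm : b ∣ m := hba.trans ham
  have hdn : d ∣ n := hdc.trans hcn
  have hma : 0 < m / a := Nat.div_pos (Nat.le_of_dvd hm ham) ha
  have hmb : 0 < m / b := Nat.div_pos (Nat.le_of_dvd hm hbm) hb
  have hkey : m / b = a / b * (m / a) := by
    rw [Nat.div_mul_div_comm hba ham, mul_comm a m, Nat.mul_div_mul_right m b ha]
  have hnkey : n / d = c / d * (n / c) := by
    rw [Nat.div_mul_div_comm hdc hcn, mul_comm c n, Nat.mul_div_mul_right n d hc]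
  have hmem : ∀ x : ZMod m × ZMod n, x ∈ K ↔ ∃ i < a, ∃ j < d,
      x = (((i * (m / a) : ℕ) : ZMod m), ((i * ℓ * (n / c) + j * (n / d) : ℕ) : ZMod n)) := by
    intro x
    rw [← SetLike.mem_coe, hK]; exact Iff.rfl
  have hsmul : ∀ k : ℕ,
      (k • (QuotientAddGroup.mk ((1, 0) : ZMod m × ZMod n) : (ZMod m × ZMod n) ⧸ K) = 0) ↔
        (((k : ZMod m), (0 : ZMod n)) ∈ K) := by
    intro k
    rw [← QuotientAddGroup.mk_nsmul, QuotientAddGroup.eq_zero_iff]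
    have : k • ((1, 0) : ZMod m × ZMod n) = ((k : ZMod m), (0 : ZMod n)) := by
      simp [Prod.smul_mk, nsmul_eq_mul]
    rw [this]
  rw [addOrderOf_eq_iff hmb]
  constructor
  · -- (m/b) • (1,0) ∈ K
    rw [hsmul, hmem]
    by_cases hb1 : b = 1
    · refine ⟨0, ha, 0, hd, ?_⟩
      subst hb1
      simp [Nat.div_one]
    · have hab : a / b < a := Nat.div_lt_self ha (by omega)
      refine ⟨a / b, hab, if d ∣ ℓ then 0 else d - ℓ % d, ?_, ?_⟩
      · split_ifs with h
        · exact hd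
        · have := Nat.mod_lt ℓ hd
          have h2 : 0 < ℓ % d := Nat.pos_of_ne_zero fun h0 => h (Nat.dvd_of_mod_eq_zero h0)
          omega
      · have hjd : d ∣ ℓ + (if d ∣ ℓ then 0 else d - ℓ % d) := by
          split_ifs with h
          · simpa using h
          · have h1 : ℓ % d ≤ ℓ := Nat.mod_le ℓ d
            have h2 : ℓ % d < d := Nat.mod_lt ℓ hd
            have h3 : ℓ + (d - ℓ % d) = d * (ℓ / d) + d := by
              have := Nat.div_add_mod ℓ d
              omega
            rw [h3]
            exact dvd_add (dvd_mul_right d _) (dvd_refl d)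
        refine Prod.ext ?_ ?_
        · simp only
          rw [← hkey]
        · simp only
          symm
          rw [ZMod.natCast_eq_zero_iff]
          obtain ⟨t, ht⟩ := hjd
          have hrw : a / b * ℓ * (n / c) + (if d ∣ ℓ then 0 else d - ℓ % d) * (n / d) =
              (ℓ + (if d ∣ ℓ then 0 else d - ℓ % d)) * (n / d) := by
            rw [he, add_mul, hnkey]; ring
          rw [hrw, ht]
          exact ⟨t, by rw [mul_comm d t, mul_assoc, Nat.mul_div_cancel' hdn, mul_comm]⟩
  · intro k hk hk0 hzero
    rw [hsmul, hmem] at hzero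
    obtain ⟨i, hi, j, hj, hpair⟩ := hzero
    have h1 : (k : ZMod m) = ((i * (m / a) : ℕ) : ZMod m) := congrArg Prod.fst hpair
    have h2 : ((0 : ZMod n)) = ((i * ℓ * (n / c) + j * (n / d) : ℕ) : ZMod n) :=
      congrArg Prod.snd hpair
    have hklt : k < m := lt_of_lt_of_le hk (Nat.div_le_self m b)
    have hilt : i * (m / a) < m := by
      calc i * (m / a) < a * (m / a) := (Nat.mul_lt_mul_right hma).mpr hi
        _ = m := Nat.mul_div_cancel' ham
    have hkeq : k = i * (m / a) := by
      have h3 := congrArg ZMod.val h1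
      rwa [ZMod.val_cast_of_lt hklt, ZMod.val_cast_of_lt hilt] at h3
    have hdvd : n ∣ i * ℓ * (n / c) + j * (n / d) :=
      (ZMod.natCast_eq_zero_iff _ n).mp h2.symm
    have hq : 0 < n / c := Nat.div_pos (Nat.le_of_dvd hn hcn) hc
    have hexp : i * ℓ * (n / c) + j * (n / d) = (i * ℓ + j * (c / d)) * (n / c) := by
      rw [add_mul, hnkey]; ring
    have hcdvd : c ∣ i * ℓ + j * (c / d) := by
      have h4 : c * (n / c) ∣ (i * ℓ + j * (c / d)) * (n / c) := by
        rw [Nat.mul_div_cancel' hcn, ← hexp]; exact hdvd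
      exact (Nat.mul_dvd_mul_iff_right hq).mp h4
    have hedvd : (a / b) ∣ i * ℓ := by
      rw [he]
      have h5 : (c / d) ∣ c := Nat.div_dvd_of_dvd hdc
      have h6 := Nat.dvd_sub (h5.trans hcdvd) (dvd_mul_left (c / d) j)
      simpa using h6
    have hei : (a / b) ∣ i := (Nat.Coprime.symm hℓ3).dvd_of_dvd_mul_right hedvd
    obtain ⟨t, rfl⟩ := hei
    rcases Nat.eq_zero_or_pos t with rfl | ht
    · rw [mul_zero, zero_mul] at hkeq; omega
    · have h7 : a / b * 1 * (m / a) ≤ a / b * t * (m / a) := by gcongr <;> omega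
      rw [mul_one] at h7
      omega
end

section
/- For a prime p and integers 1 ≤ a < b, the number of automorphisms of Z_{p^a} × Z_{p^b} equals p^{3a+b}(1 − 1/p)^2, i.e., p^{3a+b−2}(p−1)^2. -/
/-!
Writing `G = ZMod (p ^ a) × ZMod (p ^ b)`, an endomorphism of `G` is determined by the images
`(α, c)` of `(1, 0)` and `(β, δ)` of `(0, 1)`. Since `p ^ a • (1, 0) = 0`, the entry `c` lies in the
`p ^ a`-torsion of `ZMod (p ^ b)`, which is the image of the embedding `1 ↦ p ^ (b - a)` of
`ZMod (p ^ a)`; so endomorphisms are the matrices `[[α, β], [p ^ (b - a) γ, δ]]` with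
`α, β, γ ∈ ZMod (p ^ a)` and `δ ∈ ZMod (p ^ b)`. Because `b > a`, the entry `p ^ (b - a) γ` is
nilpotent, and such a matrix is invertible exactly when `α` and `δ` are units. Hence
`|Aut G| = φ(p ^ a) · p ^ a · p ^ a · φ(p ^ b)`.
-/

theorem AddMonoidHom.ext_zmod_prod {m n : ℕ} [NeZero m] [NeZero n] {M : Type*} [AddMonoid M]
    {f g : ZMod m × ZMod n →+ M} (h₁ : f (1, 0) = g (1, 0)) (h₂ : f (0, 1) = g (0, 1)) :
    f = g := by
  ext ⟨x, y⟩
  have hxy : (x, y) = x.val • ((1 : ZMod m), (0 : ZMod n)) + y.val • ((0 : ZMod m), (1 : ZMod n)) :=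
    by ext <;> simp
  rw [hxy, map_add, map_add, map_nsmul, map_nsmul, map_nsmul, map_nsmul, h₁, h₂]

namespace ZMod

variable {p a b : ℕ}

theorem natCast_pow_self (p k : ℕ) : (p : ZMod (p ^ k)) ^ k = 0 := by
  exact_mod_cast natCast_self (p ^ k)

theorem isNilpotent_natCast_pow (p n : ℕ) {k : ℕ} (hk : k ≠ 0) :
    IsNilpotent ((p : ZMod (p ^ n)) ^ k) :=
  IsNilpotent.pow_of_pos ⟨n, natCast_pow_self p n⟩ hk

def mulPowHom (p : ℕ) (hab : a ≤ b) : ZMod (p ^ a) →+ ZMod (p ^ b) :=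
  lift (p ^ a) ⟨(AddMonoidHom.mulLeft ((p : ZMod (p ^ b)) ^ (b - a))).comp (Int.castAddHom _), by
    simp [← pow_add, Nat.sub_add_cancel hab, natCast_pow_self]⟩

theorem mulPowHom_intCast (hab : a ≤ b) (n : ℤ) :
    mulPowHom p hab n = (p : ZMod (p ^ b)) ^ (b - a) * n :=
  lift_coe _ _ n

theorem mulPowHom_natCast (hab : a ≤ b) (n : ℕ) :
    mulPowHom p hab n = (p : ZMod (p ^ b)) ^ (b - a) * n := by
  exact_mod_cast mulPowHom_intCast hab n

theorem castHom_mulPowHom (hab : a ≤ b) (x : ZMod (p ^ a)) :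
    castHom (pow_dvd_pow p hab) (ZMod (p ^ a)) (mulPowHom p hab x) =
      (p : ZMod (p ^ a)) ^ (b - a) * x := by
  conv_lhs => rw [← intCast_zmod_cast x, mulPowHom_intCast]
  rw [map_mul, map_pow, map_natCast, map_intCast, intCast_zmod_cast]

theorem isNilpotent_mulPowHom (hab : a < b) (x : ZMod (p ^ a)) :
    IsNilpotent (mulPowHom p hab.le x) := by
  rw [← intCast_zmod_cast x, mulPowHom_intCast]
  exact (Commute.all _ _).isNilpotent_mul_right (isNilpotent_natCast_pow p b (by omega))

def matrixHom (p : ℕ) (hab : a ≤ b) (α β γ : ZMod (p ^ a)) (δ : ZMod (p ^ b)) :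
    ZMod (p ^ a) × ZMod (p ^ b) →+ ZMod (p ^ a) × ZMod (p ^ b) where
  toFun t :=
    (α * t.1 + β * castHom (pow_dvd_pow p hab) _ t.2, mulPowHom p hab (γ * t.1) + δ * t.2)
  map_zero' := by simp
  map_add' s t := by
    ext
    · simp only [Prod.fst_add, Prod.snd_add, map_add]
      ring
    · simp only [Prod.fst_add, Prod.snd_add, mul_add, map_add]
      abel

@[simp]
theorem matrixHom_apply (hab : a ≤ b) (α β γ : ZMod (p ^ a)) (δ : ZMod (p ^ b))
    (t : ZMod (p ^ a) × ZMod (p ^ b)) :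
    matrixHom p hab α β γ δ t =
      (α * t.1 + β * castHom (pow_dvd_pow p hab) _ t.2, mulPowHom p hab (γ * t.1) + δ * t.2) :=
  rfl

variable [NeZero p]

theorem mulPowHom_injective (hab : a ≤ b) : Function.Injective (mulPowHom p hab) := by
  rw [injective_iff_map_eq_zero]
  intro x hx
  rw [← natCast_zmod_val x, mulPowHom_natCast, ← Nat.cast_pow, ← Nat.cast_mul,
    natCast_eq_zero_iff] at hx
  rw [← natCast_zmod_val x, natCast_eq_zero_iff]
  exact Nat.dvd_of_mul_dvd_mul_left (pow_pos (NeZero.pos p) _)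
    ((pow_sub_mul_pow p hab).dvd.trans hx)

theorem exists_mulPowHom_eq (hab : a ≤ b) {c : ZMod (p ^ b)} (hc : p ^ a • c = 0) :
    ∃ γ, mulPowHom p hab γ = c := by
  rw [nsmul_eq_mul, ← natCast_zmod_val c, ← Nat.cast_mul, natCast_eq_zero_iff] at hc
  obtain ⟨d, hd⟩ :=
    Nat.dvd_of_mul_dvd_mul_left (pow_pos (NeZero.pos p) _) ((pow_mul_pow_sub p hab).dvd.trans hc)
  refine ⟨d, ?_⟩
  rw [mulPowHom_natCast, ← natCast_zmod_val c, hd]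
  push_cast
  rfl

theorem exists_eq_matrixHom (hab : a ≤ b)
    (f : ZMod (p ^ a) × ZMod (p ^ b) →+ ZMod (p ^ a) × ZMod (p ^ b)) :
    ∃ γ, f = matrixHom p hab (f (1, 0)).1 (f (0, 1)).1 γ (f (0, 1)).2 := by
  have hc : p ^ a • (f (1, 0)).2 = 0 := by
    rw [← Prod.smul_snd, ← map_nsmul, Prod.smul_mk, nsmul_eq_mul, mul_one, natCast_self,
      smul_zero, Prod.mk_zero_zero, map_zero, Prod.snd_zero]
  obtain ⟨γ, hγ⟩ := exists_mulPowHom_eq hab hc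
  exact ⟨γ, AddMonoidHom.ext_zmod_prod (by simp [hγ]) (by simp [-castHom_apply])⟩

theorem matrixHom_inj (hab : a ≤ b) {α β γ α' β' γ' : ZMod (p ^ a)} {δ δ' : ZMod (p ^ b)} :
    matrixHom p hab α β γ δ = matrixHom p hab α' β' γ' δ' ↔
      α = α' ∧ β = β' ∧ γ = γ' ∧ δ = δ' := by
  refine ⟨fun h => ?_, by rintro ⟨rfl, rfl, rfl, rfl⟩; rfl⟩
  have h₁ := DFunLike.congr_fun h (1, 0)
  have h₂ := DFunLike.congr_fun h (0, 1)
  simp only [matrixHom_apply, mul_one, mul_zero, add_zero, zero_add, map_zero, map_one,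
    Prod.mk.injEq] at h₁ h₂
  exact ⟨h₁.1, h₂.1, mulPowHom_injective hab h₁.2, h₂.2⟩

theorem bijective_matrixHom_iff (hab : a < b) {α β γ : ZMod (p ^ a)} {δ : ZMod (p ^ b)} :
    Function.Bijective (matrixHom p hab.le α β γ δ) ↔ IsUnit α ∧ IsUnit δ := by
  set π := castHom (pow_dvd_pow p hab.le) (ZMod (p ^ a))
  have hpa : IsNilpotent ((p : ZMod (p ^ a)) ^ (b - a)) := isNilpotent_natCast_pow p a (by omega)
  constructor
  · intro hf
    have hδ : IsUnit δ := by
      obtain ⟨⟨x, y⟩, hxy⟩ := hf.2 (0, 1)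
      simp only [matrixHom_apply, Prod.mk.injEq] at hxy
      have hδy : δ * y = 1 + -mulPowHom p hab.le (γ * x) := by linear_combination hxy.2
      refine isUnit_of_mul_isUnit_left (x := δ) (y := y) ?_
      rw [hδy]
      exact (isNilpotent_mulPowHom hab _).neg.isUnit_add_left_of_commute isUnit_one
        (Commute.all _ _)
    refine ⟨?_, hδ⟩
    obtain ⟨⟨x, y⟩, hxy⟩ := hf.2 (1, 0)
    simp only [matrixHom_apply, Prod.mk.injEq] at hxy
    have hy : IsNilpotent y := by
      rw [← hδ.isNilpotent_mul_unit_of_commute_iff (Commute.all _ _),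
        show y * δ = -mulPowHom p hab.le (γ * x) by linear_combination hxy.2]
      exact (isNilpotent_mulPowHom hab _).neg
    have hαx : α * x = 1 + -(β * π y) := by linear_combination hxy.1
    refine isUnit_of_mul_isUnit_left (x := α) (y := x) ?_
    rw [hαx]
    exact ((Commute.all _ _).isNilpotent_mul_left (hy.map π)).neg.isUnit_add_left_of_commute
      isUnit_one (Commute.all _ _)
  · rintro ⟨hα, hδ⟩
    rw [← Finite.injective_iff_bijective, injective_iff_map_eq_zero]
    rintro ⟨x, y⟩ hxy
    simp only [matrixHom_apply, Prod.mk_eq_zero] at hxy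
    have hy : y = -(↑hδ.unit⁻¹ * mulPowHom p hab.le (γ * x)) := by
      linear_combination (↑hδ.unit⁻¹ : ZMod (p ^ b)) * hxy.2 - y * hδ.mul_val_inv
    -- `x` is killed by the Schur complement `α - β δ⁻¹ p^(b-a) γ`, a unit plus a nilpotent.
    have hx : (α + -(β * π ↑hδ.unit⁻¹ * (p : ZMod (p ^ a)) ^ (b - a) * γ)) * x = 0 := by
      rw [hy, map_neg, map_mul, castHom_mulPowHom] at hxy
      linear_combination hxy.1
    have hunit : IsUnit (α + -(β * π ↑hδ.unit⁻¹ * (p : ZMod (p ^ a)) ^ (b - a) * γ)) :=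
      ((Commute.all _ _).isNilpotent_mul_right
        ((Commute.all _ _).isNilpotent_mul_left hpa)).neg.isUnit_add_left_of_commute hα
        (Commute.all _ _)
    have hx0 : x = 0 := hunit.mul_right_eq_zero.mp hx
    simp [hx0, hy]

noncomputable def matrixAddAut (hab : a < b)
    (q : (ZMod (p ^ a))ˣ × ZMod (p ^ a) × ZMod (p ^ a) × (ZMod (p ^ b))ˣ) :
    AddAut (ZMod (p ^ a) × ZMod (p ^ b)) :=
  AddEquiv.ofBijective (matrixHom p hab.le q.1 q.2.1 q.2.2.1 q.2.2.2)
    ((bijective_matrixHom_iff hab).2 ⟨q.1.isUnit, q.2.2.2.isUnit⟩)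

theorem matrixAddAut_bijective (hab : a < b) :
    Function.Bijective (matrixAddAut (p := p) hab) := by
  constructor
  · rintro ⟨α, β, γ, δ⟩ ⟨α', β', γ', δ'⟩ h
    obtain ⟨hα, rfl, rfl, hδ⟩ := (matrixHom_inj hab.le).1 (congrArg AddEquiv.toAddMonoidHom h)
    rw [show α = α' from Units.ext hα, show δ = δ' from Units.ext hδ]
  · intro e
    obtain ⟨γ, hγ⟩ := exists_eq_matrixHom hab.le e.toAddMonoidHom
    obtain ⟨hα, hδ⟩ := (bijective_matrixHom_iff hab).1 (by rw [← hγ]; exact e.bijective)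
    exact ⟨⟨hα.unit, _, γ, hδ.unit⟩, AddEquiv.toAddMonoidHom_injective hγ.symm⟩

theorem card_addAut_prod_of_lt (hab : a < b) :
    Nat.card (AddAut (ZMod (p ^ a) × ZMod (p ^ b))) =
      (p ^ a).totient * (p ^ a * (p ^ a * (p ^ b).totient)) := by
  rw [← Nat.card_eq_of_bijective _ (matrixAddAut_bijective hab), Nat.card_prod, Nat.card_prod,
    Nat.card_prod, Nat.card_zmod, Nat.card_eq_fintype_card, Nat.card_eq_fintype_card,
    card_units_eq_totient, card_units_eq_totient]

end ZMod

/-- For `1 ≤ a < b`, the number of automorphisms of `Z_{p^a} × Z_{p^b}` equals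
`p^{3a+b}(1 - 1/p)^2 = p^{3a+b-2}(p-1)^2`. -/
theorem card_aut_zmod_prod_lt (p a b : ℕ) (hp : p.Prime) (ha : 1 ≤ a) (hab : a < b) :
    Nat.card (AddAut (ZMod (p ^ a) × ZMod (p ^ b))) = p ^ (3 * a + b - 2) * (p - 1) ^ 2 := by
  have : NeZero p := ⟨hp.ne_zero⟩
  rw [ZMod.card_addAut_prod_of_lt hab, Nat.totient_prime_pow hp (by omega),
    Nat.totient_prime_pow hp (by omega)]
  calc p ^ (a - 1) * (p - 1) * (p ^ a * (p ^ a * (p ^ (b - 1) * (p - 1))))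
      = p ^ (a - 1 + a + a + (b - 1)) * (p - 1) ^ 2 := by ring
    _ = p ^ (3 * a + b - 2) * (p - 1) ^ 2 := by congr 2; omega
end
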